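/- arXiv:2106.16185 — 8 statements merged into one kernel-verified Lean document; each statement's English description precedes it below -/
import Mathlib

section
/- Let C be an s×m matrix with non-negative rational entries and non-zero columns, let {I_n} be the filtration of the covering polyhedron Q(C), and let α̂(F) = lim_{n→∞} α_F(n)/n be the Waldschmidt constant. Then α̂(F) equals the optimal value of the linear program: minimize y_1 + ... + y_s subject to yC ≥ 1 and y ≥ 0; moreover this optimal value is attained at a rational vertex of Q(C). -/
open MvPolynomial

noncomputable section

/-- Membership of a rational point in the covering polyhedron `Q(C) = {x : x ≥ 0, xC ≥ 1}`. -/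
def memCP {s m : ℕ} (C : Matrix (Fin s) (Fin m) ℚ) (x : Fin s → ℚ) : Prop :=
  (∀ i, 0 ≤ x i) ∧ ∀ j, 1 ≤ ∑ i, x i * C i j

/-- The covering polyhedron `Q(C) ⊆ ℝ^s` of the matrix `C`. -/
def CPset {s m : ℕ} (C : Matrix (Fin s) (Fin m) ℚ) : Set (Fin s → ℝ) :=
  {x | (∀ i, 0 ≤ x i) ∧ ∀ j, (1 : ℝ) ≤ ∑ i, x i * (C i j : ℝ)}

/-- The `n`-th ideal of the filtration associated to the covering polyhedron of `C`. -/
def filtIdeal (K : Type*) [Field K] {s m : ℕ} (C : Matrix (Fin s) (Fin m) ℚ) (n : ℕ) :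
    Ideal (MvPolynomial (Fin s) K) :=
  if n = 0 then ⊤ else
    Ideal.span { f | ∃ a : Fin s →₀ ℕ,
      f = monomial a 1 ∧ memCP C (fun i => (a i : ℚ) / n) }

/-- `α_F(n)`: the least degree of a monomial in `I_n`. -/
def alphaF (K : Type*) [Field K] {s m : ℕ} (C : Matrix (Fin s) (Fin m) ℚ) (n : ℕ) : ℕ :=
  sInf { d | ∃ a : Fin s →₀ ℕ,
    (monomial a 1 : MvPolynomial (Fin s) K) ∈ filtIdeal K C n ∧ d = ∑ i, a i }

/-- The Waldschmidt constant `α̂(F) = lim α_F(n)/n = inf α_F(n)/n`. -/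
def waldschmidt (K : Type*) [Field K] {s m : ℕ} (C : Matrix (Fin s) (Fin m) ℚ) : ℝ :=
  ⨅ n : ℕ+, (alphaF K C (n : ℕ) : ℝ) / (n : ℕ)

/-! The minimum of `∑ yᵢ` over the covering polyhedron `Q(C)` is attained, since `Q(C)` is closed,
nonempty and lies in the nonnegative orthant. The face where it is attained is exposed and compact,
so by Krein–Milman it contains an extreme point of `Q(C)`. An extreme point is the unique solution
of its tight constraints, a linear system with rational coefficients, hence it is rational.

A monomial `t^a` lies in `I_n` exactly when `a` dominates some `b` with `b/n ∈ Q(C)`, so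
`α_F(n)/n` is at least the minimum; conversely, writing the rational minimiser as `a/n` shows that
`α_F(n)/n` is at most the minimum for that `n`. -/

open Set Filter Topology

section ExtremePoints

variable {E : Type*} [AddCommGroup E] [Module ℝ E]

lemma eq_zero_of_mem_extremePoints_of_add_mem_of_sub_mem {S : Set E} {x v : E}
    (hx : x ∈ S.extremePoints ℝ) (hadd : x + v ∈ S) (hsub : x - v ∈ S) : v = 0 := by
  have hseg : x ∈ openSegment ℝ (x + v) (x - v) :=
    ⟨1 / 2, 1 / 2, by norm_num, by norm_num, by norm_num, by module⟩
  simpa using ((mem_extremePoints.1 hx).2 _ hadd _ hsub hseg).1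

variable [TopologicalSpace E] [T2Space E] [IsTopologicalAddGroup E] [ContinuousSMul ℝ E]
  [LocallyConvexSpace ℝ E]

theorem exists_mem_extremePoints_isMinOn {S : Set E} (hS : IsClosed S) (l : StrongDual ℝ E)
    {x₀ : E} (hx₀ : x₀ ∈ S) (hK : IsCompact {x ∈ S | l x ≤ l x₀}) :
    ∃ x ∈ S.extremePoints ℝ, IsMinOn l S x := by
  obtain ⟨x₁, hx₁K, hx₁min⟩ := hK.exists_isMinOn ⟨x₀, hx₀, le_rfl⟩ l.continuous.continuousOn
  have hx₁ : IsMinOn l S x₁ := fun y hy =>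
    (le_total (l y) (l x₀)).elim (fun h => hx₁min ⟨hy, h⟩) fun h => (hx₁min ⟨hx₀, le_rfl⟩).trans h
  -- the face of `S` on which `l` is minimal is exposed by `-l`, and compact since it lies in the
  -- compact sublevel set
  set F := (-l).toExposed S
  have hF : IsExposed ℝ S F := ContinuousLinearMap.toExposed.isExposed
  have hFK : F ⊆ {x ∈ S | l x ≤ l x₀} := fun x hx =>
    ⟨hx.1, by simpa using (hx.2 x₁ hx₁K.1).trans' (neg_le_neg (hx₁min ⟨hx₀, le_rfl⟩))⟩
  have hx₁F : x₁ ∈ F := ⟨hx₁K.1, fun y hy => neg_le_neg (hx₁ hy)⟩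
  obtain ⟨x, hx⟩ := (hK.of_isClosed_subset (hF.isClosed hS) hFK).extremePoints_nonempty ⟨x₁, hx₁F⟩
  exact ⟨x, hF.isExtreme.extremePoints_subset_extremePoints hx,
    fun y hy => neg_le_neg_iff.1 (hx.1.2 y hy)⟩

end ExtremePoints

theorem Matrix.exists_mul_eq_one_of_ker_mulVecLin_eq_bot {K m n : Type*} [Field K] [Fintype m]
    [Fintype n] [DecidableEq n] {A : Matrix m n K} (hA : LinearMap.ker A.mulVecLin = ⊥) :
    ∃ B : Matrix n m K, B * A = 1 := by
  classical
  obtain ⟨g, hg⟩ := A.mulVecLin.exists_leftInverse_of_injective hA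
  refine ⟨LinearMap.toMatrix' g, ?_⟩
  calc LinearMap.toMatrix' g * A = LinearMap.toMatrix' (g ∘ₗ A.mulVecLin) := by
        rw [LinearMap.toMatrix'_comp, ← Matrix.toLin'_apply', LinearMap.toMatrix'_toLin']
    _ = 1 := by rw [hg, LinearMap.toMatrix'_id]

section RatPolyhedron

open Matrix

variable {ι σ : Type*} [Fintype σ]

def ratPolyhedron (A : Matrix ι σ ℚ) (b : ι → ℚ) : Set (σ → ℝ) :=
  {x | ∀ r, (b r : ℝ) ≤ (A.map (↑) *ᵥ x) r}

variable {A : Matrix ι σ ℚ} {b : ι → ℚ} {x : σ → ℝ}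

lemma isClosed_ratPolyhedron : IsClosed (ratPolyhedron A b) := by
  simp only [ratPolyhedron, ofPred_forall]
  exact isClosed_iInter fun r => isClosed_le continuous_const (by fun_prop)

variable [Fintype ι]

lemma eq_zero_of_mem_extremePoints_ratPolyhedron (hx : x ∈ (ratPolyhedron A b).extremePoints ℝ)
    {d : σ → ℝ} (hd : ∀ r, (A.map (↑) *ᵥ x) r = b r → (A.map (↑) *ᵥ d) r = 0) : d = 0 := by
  -- moving along `d` keeps the tight rows tight, and the slack rows stay slack for small steps
  have hline : ∀ᶠ t : ℝ in 𝓝 0, x + t • d ∈ ratPolyhedron A b := by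
    refine eventually_all.2 fun r => ?_
    simp only [mulVec_add, mulVec_smul, Pi.add_apply, Pi.smul_apply, smul_eq_mul]
    rcases (hx.1 r).eq_or_lt with htight | hslack
    · exact .of_forall fun t => by rw [hd r htight.symm, mul_zero, add_zero, htight]
    · exact Tendsto.eventually_const_le hslack <|
        (by fun_prop : Continuous fun t : ℝ => (A.map (↑) *ᵥ x) r + t * (A.map (↑) *ᵥ d) r).tendsto'
          0 _ (by simp)
  obtain ⟨ε, hε, hball⟩ := Metric.eventually_nhds_iff.1 hline
  have hadd := hball (y := ε / 2) (by rw [Real.dist_0_eq_abs, abs_of_pos (half_pos hε)]; linarith)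
  have hsub := hball (y := -(ε / 2)) (by
    rw [Real.dist_0_eq_abs, abs_neg, abs_of_pos (half_pos hε)]; linarith)
  rw [neg_smul, ← sub_eq_add_neg] at hsub
  exact (smul_eq_zero.1 (eq_zero_of_mem_extremePoints_of_add_mem_of_sub_mem hx hadd hsub)).resolve_left
    (by positivity)

theorem exists_rat_eq_of_mem_extremePoints_ratPolyhedron
    (hx : x ∈ (ratPolyhedron A b).extremePoints ℝ) : ∃ q : σ → ℚ, (fun i => (q i : ℝ)) = x := by
  -- `x` is the only solution of its tight subsystem `M x = b_T`, whose rational matrix `M` has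
  -- a rational left inverse `N`, so `x = N b_T`
  classical
  set T := {r // (A.map ((↑) : ℚ → ℝ) *ᵥ x) r = b r}
  set M : Matrix T σ ℚ := A.submatrix Subtype.val id
  have hM : LinearMap.ker M.mulVecLin = ⊥ := by
    refine ker_mulVecLin_eq_bot_iff.2 fun v hv => ?_
    have hcast : (fun i => (v i : ℝ)) = 0 := by
      refine eq_zero_of_mem_extremePoints_ratPolyhedron hx fun r hr => ?_
      simpa [Function.comp_def] using (RingHom.map_mulVec (Rat.castHom ℝ) A v r).symm.trans
        (congrArg ((↑) : ℚ → ℝ) (congrFun hv ⟨r, hr⟩))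
    exact funext fun i => by simpa using congrFun hcast i
  obtain ⟨N, hNM⟩ := exists_mul_eq_one_of_ker_mulVecLin_eq_bot hM
  refine ⟨N *ᵥ fun r => b r, funext fun i => ?_⟩
  have hMx : M.map (Rat.castHom ℝ) *ᵥ x = fun r : T => (b r : ℝ) := funext fun r => r.2
  calc ((N *ᵥ fun r : T => b r) i : ℝ)
      = (N.map (Rat.castHom ℝ) *ᵥ (M.map (Rat.castHom ℝ) *ᵥ x)) i := by
        rw [hMx]; exact RingHom.map_mulVec (Rat.castHom ℝ) N _ i
    _ = x i := by
        rw [mulVec_mulVec, ← Matrix.map_mul, hNM, Matrix.map_one _ (map_zero _) (map_one _),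
          one_mulVec]

end RatPolyhedron

section CoveringPolyhedron

open Matrix

variable {s m : ℕ} {C : Matrix (Fin s) (Fin m) ℚ}

lemma CPset_eq_ratPolyhedron :
    CPset C = ratPolyhedron (fromRows (1 : Matrix (Fin s) (Fin s) ℚ) Cᵀ) (Sum.elim 0 1) := by
  ext x
  simp only [CPset, ratPolyhedron, mem_ofPred_eq, Sum.forall, fromRows_map, fromRows_mulVec,
    Sum.elim_inl, Sum.elim_inr, Matrix.map_one _ Rat.cast_zero Rat.cast_one, one_mulVec,
    transpose_map]
  simp [mulVec, dotProduct, mul_comm]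

lemma memCP_iff_mem_CPset (q : Fin s → ℚ) : memCP C q ↔ (fun i => (q i : ℝ)) ∈ CPset C := by
  simp only [memCP, CPset, mem_ofPred_eq, Rat.cast_nonneg]
  exact and_congr_right' <| forall_congr' fun j => by exact_mod_cast Iff.rfl

lemma exists_natCast_memCP (hC : ∀ i j, 0 ≤ C i j) (hcol : ∀ j, ∃ i, C i j ≠ 0) :
    ∃ N : ℕ, memCP C fun _ => (N : ℚ) := by
  have hcolsum : ∀ j, 0 < ∑ i, C i j := fun j =>
    let ⟨i, hi⟩ := hcol j
    Finset.sum_pos' (fun i _ => hC i j) ⟨i, Finset.mem_univ i, (hC i j).lt_of_ne' hi⟩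
  have hlarge : ∀ᶠ N : ℕ in atTop, ∀ j, 1 ≤ (N : ℚ) * ∑ i, C i j := eventually_all.2 fun j =>
    (tendsto_natCast_atTop_atTop.atTop_mul_const (hcolsum j)).eventually_ge_atTop 1
  obtain ⟨N, hN⟩ := hlarge.exists
  exact ⟨N, fun _ => N.cast_nonneg, fun j => by simpa [Finset.mul_sum] using hN j⟩

theorem exists_mem_extremePoints_CPset_isMinOn_sum (hC : ∀ i j, 0 ≤ C i j)
    (hcol : ∀ j, ∃ i, C i j ≠ 0) :
    ∃ x ∈ (CPset C).extremePoints ℝ, ∀ y ∈ CPset C, ∑ i, x i ≤ ∑ i, y i := by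
  set l : StrongDual ℝ (Fin s → ℝ) := ∑ i, ContinuousLinearMap.proj i
  have hl : ∀ x, l x = ∑ i, x i := fun x => by simp [l]
  obtain ⟨N, hN⟩ := exists_natCast_memCP hC hcol
  have hclosed : IsClosed (CPset C) := CPset_eq_ratPolyhedron ▸ isClosed_ratPolyhedron
  have hbounded : {x ∈ CPset C | l x ≤ l fun _ => (N : ℝ)} ⊆
      univ.pi fun _ => Icc 0 (∑ _ : Fin s, (N : ℝ)) := by
    rintro x ⟨hx, hxl⟩ i -
    rw [hl, hl] at hxl
    exact ⟨hx.1 i, (Finset.single_le_sum (fun i _ => hx.1 i) (Finset.mem_univ i)).trans hxl⟩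
  obtain ⟨x, hx, hmin⟩ := exists_mem_extremePoints_isMinOn hclosed l
    ((memCP_iff_mem_CPset _).1 hN) <| (isCompact_univ_pi fun _ => isCompact_Icc).of_isClosed_subset
      (hclosed.inter (isClosed_le l.continuous continuous_const)) hbounded
  exact ⟨x, hx, fun y hy => by simpa only [hl] using (hmin hy).out⟩

end CoveringPolyhedron

lemma Rat.exists_pnat_natCast_div_eq {ι : Type*} [Fintype ι] {q : ι → ℚ} (hq : ∀ i, 0 ≤ q i) :
    ∃ n : ℕ+, ∃ a : ι → ℕ, ∀ i, (a i : ℚ) / n = q i := by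
  set n : ℕ+ := ⟨∏ i, (q i).den, Finset.prod_pos fun i _ => (q i).den_pos⟩
  have hdiv : ∀ i, ∃ k : ℕ, (k : ℚ) / n = q i := fun i => by
    obtain ⟨c, hc⟩ := Finset.dvd_prod_of_mem (fun i => (q i).den) (Finset.mem_univ i)
    have hc₀ : (c : ℚ) ≠ 0 := Nat.cast_ne_zero.2 <| by
      rintro rfl
      exact n.ne_zero (by simp [n, hc])
    have hnum : ((q i).num.toNat : ℚ) = (q i).num := by
      exact_mod_cast Int.toNat_of_nonneg (Rat.num_nonneg.2 (hq i))
    refine ⟨(q i).num.toNat * c, ?_⟩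
    simp only [n, PNat.mk_coe, hc]
    push_cast
    rw [hnum, mul_div_mul_right _ _ hc₀, Rat.num_div_den]
  choose a ha using hdiv
  exact ⟨n, a, ha⟩

section Waldschmidt

variable {K : Type*} [Field K] {s m : ℕ} {C : Matrix (Fin s) (Fin m) ℚ}

lemma monomial_mem_filtIdeal_iff {n : ℕ} (hn : n ≠ 0) (a : Fin s →₀ ℕ) :
    (monomial a 1 : MvPolynomial (Fin s) K) ∈ filtIdeal K C n ↔
      ∃ b ≤ a, memCP C fun i => (b i : ℚ) / n := by
  classical
  have hgens : {f : MvPolynomial (Fin s) K | ∃ b : Fin s →₀ ℕ,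
      f = monomial b 1 ∧ memCP C fun i => (b i : ℚ) / n} =
      (fun b => monomial b 1) '' {b | memCP C fun i => (b i : ℚ) / n} := by
    ext f
    simp only [mem_ofPred_eq, mem_image]
    exact exists_congr fun b => by rw [and_comm, eq_comm]
  rw [filtIdeal, if_neg hn, hgens, mem_ideal_span_monomial_image,
    support_monomial, if_neg one_ne_zero]
  simp only [Finset.mem_singleton, forall_eq, mem_ofPred_eq]
  exact exists_congr fun b => and_comm

lemma exists_monomial_mem_filtIdeal (hC : ∀ i j, 0 ≤ C i j) (hcol : ∀ j, ∃ i, C i j ≠ 0) (n : ℕ) :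
    ∃ a : Fin s →₀ ℕ, (monomial a 1 : MvPolynomial (Fin s) K) ∈ filtIdeal K C n := by
  rcases eq_or_ne n 0 with rfl | hn
  · exact ⟨0, by simp [filtIdeal]⟩
  obtain ⟨N, hN⟩ := exists_natCast_memCP hC hcol
  refine ⟨Finsupp.equivFunOnFinite.symm fun _ => n * N, (monomial_mem_filtIdeal_iff hn _).2
    ⟨_, le_rfl, ?_⟩⟩
  convert hN using 2
  simp [hn]

lemma exists_monomial_mem_filtIdeal_sum_eq_alphaF (hC : ∀ i j, 0 ≤ C i j)
    (hcol : ∀ j, ∃ i, C i j ≠ 0) (n : ℕ) : ∃ a : Fin s →₀ ℕ,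
      (monomial a 1 : MvPolynomial (Fin s) K) ∈ filtIdeal K C n ∧ alphaF K C n = ∑ i, a i := by
  obtain ⟨a, ha⟩ := exists_monomial_mem_filtIdeal (K := K) hC hcol n
  exact Nat.sInf_mem (s := {d | ∃ a : Fin s →₀ ℕ,
    (monomial a 1 : MvPolynomial (Fin s) K) ∈ filtIdeal K C n ∧ d = ∑ i, a i}) ⟨_, a, ha, rfl⟩

lemma le_waldschmidt (hC : ∀ i j, 0 ≤ C i j) (hcol : ∀ j, ∃ i, C i j ≠ 0) {c : ℝ}
    (hc : ∀ y ∈ CPset C, c ≤ ∑ i, y i) : c ≤ waldschmidt K C := by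
  refine le_ciInf fun n => ?_
  obtain ⟨a, ha, hsum⟩ := exists_monomial_mem_filtIdeal_sum_eq_alphaF (K := K) hC hcol n
  obtain ⟨b, hba, hb⟩ := (monomial_mem_filtIdeal_iff n.ne_zero a).1 ha
  calc c ≤ ∑ i, (((b i : ℚ) / n : ℚ) : ℝ) := hc _ ((memCP_iff_mem_CPset _).1 hb)
    _ = (∑ i, (b i : ℝ)) / n := by push_cast; rw [Finset.sum_div]
    _ ≤ (∑ i, (a i : ℝ)) / n := by gcongr with i; exact_mod_cast hba i
    _ = alphaF K C n / n := by rw [hsum]; push_cast; rfl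

lemma waldschmidt_le_sum {q : Fin s → ℚ} (hq : memCP C q) : waldschmidt K C ≤ ∑ i, (q i : ℝ) := by
  obtain ⟨n, a, ha⟩ := Rat.exists_pnat_natCast_div_eq hq.1
  set a' : Fin s →₀ ℕ := Finsupp.equivFunOnFinite.symm a
  have hmem : (monomial a' 1 : MvPolynomial (Fin s) K) ∈ filtIdeal K C n :=
    (monomial_mem_filtIdeal_iff n.ne_zero a').2 ⟨a', le_rfl, by simpa [a', ha] using hq⟩
  calc waldschmidt K C ≤ alphaF K C n / n :=
        ciInf_le ⟨0, by rintro _ ⟨k, rfl⟩; positivity⟩ n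
    _ ≤ (∑ i, a' i : ℕ) / n := by gcongr; exact Nat.sInf_le ⟨a', hmem, rfl⟩
    _ = ∑ i, (q i : ℝ) := by
        simp only [a', Finsupp.coe_equivFunOnFinite_symm, ← ha]
        push_cast
        rw [Finset.sum_div]

end Waldschmidt

/-- The linear program `min ∑ y_i` subject to `yC ≥ 1`, `y ≥ 0` has optimal value equal
to the Waldschmidt constant of the filtration, attained at a rational vertex of `Q(C)`. -/
theorem stmt4 {K : Type*} [Field K] {s m : ℕ} (C : Matrix (Fin s) (Fin m) ℚ)
    (hC : ∀ i j, 0 ≤ C i j) (hcol : ∀ j, ∃ i, C i j ≠ 0) :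
    ∃ β : Fin s → ℚ,
      (fun i => (β i : ℝ)) ∈ Set.extremePoints ℝ (CPset C) ∧
      (∑ i, (β i : ℝ)) = waldschmidt K C ∧
      ∀ y ∈ CPset C, waldschmidt K C ≤ ∑ i, y i := by
  obtain ⟨x, hx, hmin⟩ := exists_mem_extremePoints_CPset_isMinOn_sum hC hcol
  obtain ⟨β, rfl⟩ := exists_rat_eq_of_mem_extremePoints_ratPolyhedron
    (CPset_eq_ratPolyhedron (C := C) ▸ hx)
  have hβ : (∑ i, (β i : ℝ)) = waldschmidt K C :=
    le_antisymm (le_waldschmidt hC hcol hmin) (waldschmidt_le_sum ((memCP_iff_mem_CPset β).2 hx.1))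
  exact ⟨β, hx, hβ, hβ ▸ hmin⟩
end
end

section
/- Let Q = Q(C) be a covering polyhedron with vertex set V(Q), let F = {I_n} be its associated filtration, and set α(Q) = min{|v| : v ∈ V(Q)} where |v| is the sum of coordinates. Then α(Q) equals the Waldschmidt constant α̂(F) = lim_{n→∞} α_F(n)/n. -/
open MvPolynomial

noncomputable section

namespace Stmt5Aux

variable {s m : ℕ} (C : Matrix (Fin s) (Fin m) ℚ)

lemma memCP_mono (hC : ∀ i j, 0 ≤ C i j) {x y : Fin s → ℚ}
    (hx : memCP C x) (h0 : ∀ i, 0 ≤ y i) (hxy : ∀ i, x i ≤ y i) : memCP C y :=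
  ⟨h0, fun j => (hx.2 j).trans (Finset.sum_le_sum fun i _ =>
    mul_le_mul_of_nonneg_right (hxy i) (hC i j))⟩

lemma memCP_cast {q : Fin s → ℚ} (hq : memCP C q) : (fun i => (q i : ℝ)) ∈ CPset C := by
  refine ⟨fun i => ?_, fun j => ?_⟩
  · show (0:ℝ) ≤ (q i : ℝ)
    exact_mod_cast hq.1 i
  · show (1:ℝ) ≤ ∑ i, (q i : ℝ) * (C i j : ℝ)
    exact_mod_cast hq.2 j

lemma exists_memCP (hC : ∀ i j, 0 ≤ C i j) (hcol : ∀ j, ∃ i, C i j ≠ 0) :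
    ∃ q : Fin s → ℚ, memCP C q := by
  have hcpos : ∀ j, 0 < ∑ i, C i j := fun j => by
    obtain ⟨i, hi⟩ := hcol j
    exact Finset.sum_pos' (fun i _ => hC i j)
      ⟨i, Finset.mem_univ i, lt_of_le_of_ne (hC i j) (Ne.symm hi)⟩
  refine ⟨fun _ => ∑ j', (∑ i, C i j')⁻¹,
    fun i => Finset.sum_nonneg fun j _ => inv_nonneg.2 (hcpos j).le, fun j => ?_⟩
  simp only []
  rw [← Finset.mul_sum]
  calc (1:ℚ) = (∑ i, C i j)⁻¹ * ∑ i, C i j := (inv_mul_cancel₀ (hcpos j).ne').symm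
    _ ≤ (∑ j', (∑ i, C i j')⁻¹) * ∑ i, C i j := by
        refine mul_le_mul_of_nonneg_right ?_ (hcpos j).le
        exact Finset.single_le_sum (fun j' _ => inv_nonneg.2 (hcpos j').le) (Finset.mem_univ j)

lemma filtIdeal_eq (K : Type*) [Field K] {n : ℕ} (hn : n ≠ 0) :
    filtIdeal K C n = Ideal.span ((fun a => monomial a (1:K)) ''
      {a : Fin s →₀ ℕ | memCP C fun i => (a i : ℚ) / n}) := by
  rw [filtIdeal, if_neg hn]
  congr 1
  ext f
  constructor
  · rintro ⟨a, rfl, ha⟩; exact ⟨a, ha, rfl⟩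
  · rintro ⟨a, ha, rfl⟩; exact ⟨a, rfl, ha⟩

lemma monomial_mem_iff (K : Type*) [Field K] (hC : ∀ i j, 0 ≤ C i j) {n : ℕ} (hn : n ≠ 0)
    (a : Fin s →₀ ℕ) :
    (monomial a (1:K)) ∈ filtIdeal K C n ↔ memCP C (fun i => (a i : ℚ) / n) := by
  rw [filtIdeal_eq C K hn, mem_ideal_span_monomial_image]
  classical
  have hsupp : (monomial a (1:K)).support = {a} := by
    rw [support_monomial, if_neg one_ne_zero]
  constructor
  · intro h
    obtain ⟨b, hb, hba⟩ := h a (by simp [hsupp])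
    refine memCP_mono C hC hb (fun i => by positivity) fun i => ?_
    have hn' : (0:ℚ) < n := by exact_mod_cast Nat.pos_of_ne_zero hn
    have : (b i : ℚ) ≤ a i := by exact_mod_cast hba i
    exact by gcongr
  · intro h xi hxi
    have hxa : xi = a := by simpa [hsupp] using hxi
    exact ⟨a, h, hxa.ge⟩

end Stmt5Aux

/-- `α(Q) = min{|v| : v a vertex of Q}` equals the Waldschmidt constant `α̂(F)`. -/
theorem stmt5 {K : Type*} [Field K] {s m : ℕ} (C : Matrix (Fin s) (Fin m) ℚ)
    (hC : ∀ i j, 0 ≤ C i j) (hcol : ∀ j, ∃ i, C i j ≠ 0) :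
    sInf {r : ℝ | ∃ v ∈ Set.extremePoints ℝ (CPset C), r = ∑ i, v i} = waldschmidt K C := by
  classical
  obtain ⟨q0, hq0⟩ := Stmt5Aux.exists_memCP C hC hcol
  have hx0 : (fun i => (q0 i : ℝ)) ∈ CPset C := Stmt5Aux.memCP_cast C hq0
  -- CPset is closed
  have hsumcont : Continuous (fun x : Fin s → ℝ => ∑ i, x i) :=
    continuous_finset_sum _ fun i _ => continuous_apply i
  have hQclosed : IsClosed (CPset C) := by
    have : CPset C = (⋂ i, {x : Fin s → ℝ | 0 ≤ x i}) ∩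
        ⋂ j, {x : Fin s → ℝ | (1:ℝ) ≤ ∑ i, x i * (C i j : ℝ)} := by
      ext x; simp [CPset, Set.mem_iInter]
    rw [this]
    exact IsClosed.inter
      (isClosed_iInter fun i => isClosed_le continuous_const (continuous_apply i))
      (isClosed_iInter fun j => isClosed_le continuous_const
        (continuous_finset_sum _ fun i _ => (continuous_apply i).mul continuous_const))
  -- CPset is convex
  have hQconv : Convex ℝ (CPset C) := by
    intro x hx y hy a b ha hb hab
    refine ⟨fun i => add_nonneg (mul_nonneg ha (hx.1 i)) (mul_nonneg hb (hy.1 i)), fun j => ?_⟩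
    have hrw : ∑ i, (a • x + b • y) i * (C i j : ℝ)
        = a * ∑ i, x i * (C i j : ℝ) + b * ∑ i, y i * (C i j : ℝ) := by
      simp only [Pi.add_apply, Pi.smul_apply, smul_eq_mul, add_mul, Finset.sum_add_distrib,
        Finset.mul_sum, mul_assoc]
    rw [hrw]
    calc (1:ℝ) = a * 1 + b * 1 := by rw [mul_one, mul_one, hab]
      _ ≤ _ := add_le_add (mul_le_mul_of_nonneg_left (hx.2 j) ha)
          (mul_le_mul_of_nonneg_left (hy.2 j) hb)
  -- minimizer of the coordinate sum over CPset
  set T := ∑ i, (q0 i : ℝ) with hT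
  have hKsub : CPset C ∩ {x | ∑ i, x i ≤ T} ⊆ Set.Icc (0 : Fin s → ℝ) (fun _ => T) := by
    rintro x ⟨hxQ, hxT⟩
    refine ⟨fun i => hxQ.1 i, fun i => ?_⟩
    exact (Finset.single_le_sum (fun i _ => hxQ.1 i) (Finset.mem_univ i)).trans hxT
  have hKcomp : IsCompact (CPset C ∩ {x | ∑ i, x i ≤ T}) :=
    IsCompact.of_isClosed_subset isCompact_Icc
      (hQclosed.inter (isClosed_le hsumcont continuous_const)) hKsub
  obtain ⟨v0, hv0K, hv0m⟩ := hKcomp.exists_isMinOn ⟨_, hx0, le_refl T⟩ hsumcont.continuousOn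
  have hv0Q : v0 ∈ CPset C := hv0K.1
  have hv0min : ∀ y ∈ CPset C, ∑ i, v0 i ≤ ∑ i, y i := by
    intro y hy
    by_cases h : ∑ i, y i ≤ T
    · exact isMinOn_iff.mp hv0m y ⟨hy, h⟩
    · exact (isMinOn_iff.mp hv0m _ ⟨hx0, le_refl T⟩).trans (not_le.mp h).le
  set μ := ∑ i, v0 i with hμ
  -- waldschmidt ≤ ∑ x for any x ∈ CPset C
  have hwle : ∀ x ∈ CPset C, waldschmidt K C ≤ ∑ i, x i := by
    intro x hx
    refine le_of_forall_pos_le_add fun ε hε => ?_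
    set δ := ε / (s + 1) with hδ
    have hδpos : 0 < δ := by positivity
    choose q hq1 hq2 using fun i => exists_rat_btwn (lt_add_of_pos_right (x i) hδpos)
    have hqpos : ∀ i, 0 ≤ q i := fun i => by exact_mod_cast (hx.1 i).trans (hq1 i).le
    have hmem : memCP C q := by
      refine ⟨hqpos, fun j => ?_⟩
      have h1 : (1:ℝ) ≤ ∑ i, (q i : ℝ) * (C i j : ℝ) :=
        (hx.2 j).trans (Finset.sum_le_sum fun i _ =>
          mul_le_mul_of_nonneg_right (hq1 i).le (by exact_mod_cast hC i j))
      exact_mod_cast h1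
    set n : ℕ := ∏ i, (q i).den with hn
    have hnpos : 0 < n := Finset.prod_pos fun i _ => (q i).pos
    have key : ∀ i, ∃ z : ℕ, (z : ℚ) = q i * n := by
      intro i
      obtain ⟨k, hk⟩ : ((q i).den : ℕ) ∣ n := Finset.dvd_prod_of_mem _ (Finset.mem_univ i)
      refine ⟨(q i).num.toNat * k, ?_⟩
      have hnum : 0 ≤ (q i).num := Rat.num_nonneg.mpr (hqpos i)
      have hqden : (q i) * ((q i).den : ℚ) = ((q i).num : ℚ) := by
        rw [mul_comm]
        exact_mod_cast Rat.den_mul_eq_num (q i)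
      have htn : ((q i).num.toNat : ℚ) = ((q i).num : ℚ) := by
        exact_mod_cast Int.toNat_of_nonneg hnum
      push_cast [hk]
      rw [htn, ← mul_assoc, hqden]
    choose z hz using key
    set a : Fin s →₀ ℕ := Finsupp.equivFunOnFinite.symm z with haz
    have haq : ∀ i, (a i : ℚ) / n = q i := by
      intro i
      have : a i = z i := rfl
      rw [this, hz i]
      field_simp
    have hmem' : (monomial a (1:K)) ∈ filtIdeal K C n := by
      rw [Stmt5Aux.monomial_mem_iff C K hC hnpos.ne']
      have : (fun i => (a i : ℚ) / n) = q := funext haq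
      rw [this]; exact hmem
    have h1 : alphaF K C n ≤ ∑ i, a i := Nat.sInf_le ⟨a, hmem', rfl⟩
    have hbdd : BddBelow (Set.range fun n : ℕ+ => (alphaF K C (n:ℕ) : ℝ) / (n:ℕ)) := by
      refine ⟨0, ?_⟩
      rintro r ⟨n, rfl⟩
      positivity
    have h2 : waldschmidt K C ≤ (alphaF K C n : ℝ) / n := ciInf_le hbdd ⟨n, hnpos⟩
    have h3 : ((alphaF K C n : ℝ)) / n ≤ ∑ i, (q i : ℝ) := by
      rw [div_le_iff₀ (by exact_mod_cast hnpos)]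
      calc ((alphaF K C n : ℝ)) ≤ (∑ i, a i : ℕ) := by exact_mod_cast h1
        _ = ∑ i, (q i : ℝ) * n := by
            push_cast
            refine Finset.sum_congr rfl fun i _ => ?_
            have := haq i
            have h4 : (a i : ℚ) = q i * n := by
              field_simp at this ⊢
              linarith [this]
            exact_mod_cast congrArg (fun t : ℚ => (t : ℝ)) h4
        _ = (∑ i, (q i : ℝ)) * n := by rw [Finset.sum_mul]
    have h5 : ∑ i, (q i : ℝ) ≤ ∑ i, x i + ε := by
      calc ∑ i, (q i : ℝ) ≤ ∑ i, (x i + δ) := Finset.sum_le_sum fun i _ => (hq2 i).le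
        _ = ∑ i, x i + s * δ := by
            rw [Finset.sum_add_distrib, Finset.sum_const, Finset.card_univ, Fintype.card_fin,
              nsmul_eq_mul]
        _ ≤ ∑ i, x i + ε := by
            have : ((s:ℝ) + 1) * δ = ε := by
              rw [hδ]; field_simp
            nlinarith [hδpos]
    linarith [h2, h3, h5]
  -- μ ≤ waldschmidt
  have hμw : μ ≤ waldschmidt K C := by
    refine le_ciInf fun n => ?_
    have hn : (n : ℕ) ≠ 0 := n.pos.ne'
    have hne : { d | ∃ a : Fin s →₀ ℕ,
        (monomial a 1 : MvPolynomial (Fin s) K) ∈ filtIdeal K C n ∧ d = ∑ i, a i }.Nonempty := by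
      set a : Fin s →₀ ℕ := Finsupp.equivFunOnFinite.symm (fun i => (n : ℕ) * ⌈q0 i⌉₊) with ha
      refine ⟨∑ i, a i, a, ?_, rfl⟩
      rw [Stmt5Aux.monomial_mem_iff C K hC hn]
      refine Stmt5Aux.memCP_mono C hC hq0 (fun i => by positivity) fun i => ?_
      have hai : a i = (n : ℕ) * ⌈q0 i⌉₊ := rfl
      rw [hai]
      push_cast
      rw [mul_comm, mul_div_assoc, div_self (by exact_mod_cast hn), mul_one]
      exact Nat.le_ceil _
    obtain ⟨a, hmono, heq⟩ := Nat.sInf_mem hne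
    have hq : memCP C (fun i => (a i : ℚ) / n) :=
      (Stmt5Aux.monomial_mem_iff C K hC hn a).mp hmono
    have hr : (fun i => ((a i : ℝ)) / (n:ℕ)) ∈ CPset C := by
      have := Stmt5Aux.memCP_cast C hq
      convert this using 2 with i
      push_cast
      ring
    have := hv0min _ hr
    calc μ ≤ ∑ i, (a i : ℝ) / (n:ℕ) := this
      _ = ((∑ i, a i : ℕ) : ℝ) / (n:ℕ) := by rw [← Finset.sum_div]; push_cast; ring
      _ = (alphaF K C n : ℝ) / (n:ℕ) := by rw [← heq]; rfl
  have hw : waldschmidt K C = μ := le_antisymm (hwle v0 hv0Q) hμw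
  -- exposed face and extreme point
  set l : (Fin s → ℝ) →L[ℝ] ℝ := -(∑ i, ContinuousLinearMap.proj i) with hl
  have hlx : ∀ x : Fin s → ℝ, l x = -∑ i, x i := by
    intro x
    simp [hl, ContinuousLinearMap.sum_apply]
  set F : Set (Fin s → ℝ) := {x ∈ CPset C | ∀ y ∈ CPset C, l y ≤ l x} with hF
  have hexp : IsExposed ℝ (CPset C) F := fun _ => ⟨l, rfl⟩
  have hv0F : v0 ∈ F := ⟨hv0Q, fun y hy => by rw [hlx, hlx]; exact neg_le_neg (hv0min y hy)⟩
  have hFsum : ∀ x ∈ F, ∑ i, x i = μ := by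
    rintro x ⟨hxQ, hxm⟩
    have := hxm v0 hv0Q
    rw [hlx, hlx] at this
    exact le_antisymm (by linarith) (hv0min x hxQ)
  have hFsub : F ⊆ Set.Icc (0 : Fin s → ℝ) (fun _ => T) := by
    intro x hxF
    refine hKsub ⟨hxF.1, ?_⟩
    show ∑ i, x i ≤ T
    rw [hFsum x hxF]
    exact isMinOn_iff.mp hv0m _ ⟨hx0, le_refl T⟩
  have hFcomp : IsCompact F :=
    IsCompact.of_isClosed_subset isCompact_Icc (hexp.isClosed hQclosed) hFsub
  obtain ⟨v, hv⟩ := hFcomp.extremePoints_nonempty ⟨v0, hv0F⟩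
  have hvQ : v ∈ Set.extremePoints ℝ (CPset C) :=
    hexp.isExtreme.extremePoints_subset_extremePoints hv
  have hvsum : ∑ i, v i = μ := hFsum v (extremePoints_subset hv)
  rw [hw]
  refine le_antisymm (csInf_le ⟨μ, ?_⟩ ⟨v, hvQ, hvsum.symm⟩) (le_csInf ⟨μ, v, hvQ, hvsum.symm⟩ ?_)
  · rintro r ⟨v', hv', rfl⟩
    exact hv0min v' (extremePoints_subset hv')
  · rintro r ⟨v', hv', rfl⟩
    exact hv0min v' (extremePoints_subset hv')
end
end

section
/- Let Q ⊂ ℝ^s be a rational polyhedron. The following are equivalent: (a) Q ⊆ ℝ_+^s and Q is upward closed (if x ∈ Q and y ≥ x then y ∈ Q); (b) Q = ℝ_+^s + conv(α_1,...,α_r) for some α_1,...,α_r ∈ ℚ_+^s; (c) Q = {x : x ≥ 0, xD ≥ 1} for some rational matrix D with non-negative entries. -/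
/-- A rational polyhedron in `ℝ^s`: a finite intersection of rational closed halfspaces. -/
def IsRationalPolyhedron {s : ℕ} (Q : Set (Fin s → ℝ)) : Prop :=
  ∃ (k : ℕ) (A : Fin k → Fin s → ℚ) (b : Fin k → ℚ),
    Q = {x | ∀ j, (b j : ℝ) ≤ ∑ i, (A j i : ℝ) * x i}

/-!
(a) ⇒ (c): if `Q = {x | ∀ j, b j ≤ ∑ i, A j i * x i}` is nonempty and upward closed, every
coefficient of `A` is nonnegative (push a point of `Q` to infinity along a coordinate direction).
Constraints with `b j ≤ 0` are then implied by `x ≥ 0`, and the others are rescaled to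
right-hand side `1`. (b) ⇒ (a) is immediate.

(c) ⇒ (b) is a rational Minkowski–Weyl argument after homogenization: `x ∈ Q` iff `(1, x)` lies
in the cone `K = {(t, x) ≥ 0 | ∀ j, t ≤ ∑ i, x i * D i j}`. The orthant is generated by the unit
vectors, and the cone generated by `S` meets the halfspace `{f ≥ 0}` in the cone generated by the
`g ∈ S` with `f g ≥ 0` and the vectors `f p • n - f n • p` with `f n < 0 ≤ f p` (Fourier–Motzkin).
Cutting down the orthant one row of `D` at a time shows that `K` is generated by finitely many
rational vectors. Generators `(t, y)` with `t > 0` give the points `α = y / t`; those with `t = 0`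
are nonnegative directions, absorbed by `ℝ_+^s`.
-/

open Finset

theorem LinearMap.smul_sum_add_sum_eq_sum_pairs {R E : Type*} [CommRing R] [AddCommGroup E]
    [Module R E] (f : E →ₗ[R] R) (c : E → R) (P N : Finset E) :
    (∑ p ∈ P, c p * f p) • (∑ p ∈ P, c p • p + ∑ n ∈ N, c n • n) =
      f (∑ p ∈ P, c p • p + ∑ n ∈ N, c n • n) • ∑ p ∈ P, c p • p +
        ∑ n ∈ N, ∑ p ∈ P, (c n * c p) • (f p • n - f n • p) := by
  have hpairs : ∑ n ∈ N, ∑ p ∈ P, (c n * c p) • (f p • n - f n • p) =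
      (∑ p ∈ P, c p * f p) • ∑ n ∈ N, c n • n - (∑ n ∈ N, c n * f n) • ∑ p ∈ P, c p • p := by
    simp only [smul_sub, sum_sub_distrib, smul_sum, smul_smul, sum_mul, sum_smul]
    rw [sum_comm (s := P) (t := N)]
    congr 1 <;> exact sum_congr rfl fun _ _ => sum_congr rfl fun _ _ => by ring_nf
  simp only [hpairs, map_add, map_sum, map_smul, smul_eq_mul]
  module

namespace PointedCone

variable {𝕜 E : Type*} [Field 𝕜] [LinearOrder 𝕜] [AddCommGroup E] [Module 𝕜 E]

open Classical in
noncomputable def halfspaceGens (f : E →ₗ[𝕜] 𝕜) (S : Finset E) : Finset E :=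
  {g ∈ S | 0 ≤ f g} ∪
    image₂ (fun n p => f p • n - f n • p) {n ∈ S | f n < 0} {p ∈ S | 0 ≤ f p}

theorem coe_halfspaceGens_subset {f : E →ₗ[𝕜] 𝕜} {S : Finset E} {M : Set E}
    (hS : (S : Set E) ⊆ M) (hM : ∀ u ∈ M, ∀ v ∈ M, f v • u - f u • v ∈ M) :
    (halfspaceGens f S : Set E) ⊆ M := by
  intro g hg
  simp only [halfspaceGens, coe_union, coe_filter, coe_image₂, Set.mem_union,
    Set.mem_ofPred_eq, Set.mem_image2] at hg
  rcases hg with ⟨hgS, -⟩ | ⟨n, ⟨hnS, -⟩, p, ⟨hpS, -⟩, rfl⟩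
  · exact hS hgS
  · exact hM n (hS hnS) p (hS hpS)

variable [IsStrictOrderedRing 𝕜]

theorem mem_hull_finset_iff {S : Finset E} {x : E} :
    x ∈ hull 𝕜 (S : Set E) ↔ ∃ c : E → 𝕜, (∀ g ∈ S, 0 ≤ c g) ∧ ∑ g ∈ S, c g • g = x := by
  refine ⟨fun hx => ?_, ?_⟩
  · obtain ⟨c, -, rfl⟩ := Submodule.mem_span_finset.1 hx
    exact ⟨fun g => c g, fun g _ => (c g).2, rfl⟩
  · rintro ⟨c, hc, rfl⟩
    exact Submodule.sum_mem _ fun g hg => smul_mem _ (hc g hg) (subset_hull hg)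

theorem hull_halfspaceGens_le (f : E →ₗ[𝕜] 𝕜) (S : Finset E) :
    hull 𝕜 (halfspaceGens f S : Set E) ≤ hull 𝕜 (S : Set E) ⊓ (positive 𝕜 𝕜).comap f := by
  refine Submodule.span_le.2 fun g hg => ?_
  simp only [halfspaceGens, coe_union, coe_filter, coe_image₂, Set.mem_union,
    Set.mem_ofPred_eq, Set.mem_image2] at hg
  rcases hg with ⟨hgS, hfg⟩ | ⟨n, ⟨hnS, hfn⟩, p, ⟨hpS, hfp⟩, rfl⟩
  · exact ⟨subset_hull hgS, hfg⟩
  · refine ⟨?_, ?_⟩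
    · rw [sub_eq_add_neg, ← neg_smul]
      exact add_mem (smul_mem _ hfp (subset_hull hnS))
        (smul_mem _ (neg_nonneg.2 hfn.le) (subset_hull hpS))
    · simp [mul_comm]

theorem hull_halfspaceGens (f : E →ₗ[𝕜] 𝕜) (S : Finset E) :
    hull 𝕜 (halfspaceGens f S : Set E) = hull 𝕜 (S : Set E) ⊓ (positive 𝕜 𝕜).comap f := by
  classical
  refine le_antisymm (hull_halfspaceGens_le f S) ?_
  rintro x ⟨hxS, hfx : 0 ≤ f x⟩
  obtain ⟨c, hc, rfl⟩ := mem_hull_finset_iff.1 hxS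
  set P := {p ∈ S | 0 ≤ f p}
  set N := {n ∈ S | f n < 0}
  have hsplit : ∑ g ∈ S, c g • g = ∑ p ∈ P, c p • p + ∑ n ∈ N, c n • n := by
    simp only [P, N, ← not_le]
    exact (sum_filter_add_sum_filter_not S _ _).symm
  have hXP : ∑ p ∈ P, c p • p ∈ hull 𝕜 (halfspaceGens f S : Set E) :=
    Submodule.sum_mem _ fun p hp =>
      smul_mem _ (hc p (mem_filter.1 hp).1) (subset_hull (subset_union_left hp))
  have he : 0 ≤ ∑ p ∈ P, c p * f p :=
    sum_nonneg fun p hp => mul_nonneg (hc p (mem_filter.1 hp).1) (mem_filter.1 hp).2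
  rw [hsplit] at hfx ⊢
  rcases he.eq_or_lt with he0 | hepos
  · -- no positive mass, so `f x ≥ 0` forces the coefficients of `N` to vanish
    have hterm : ∀ n ∈ N, c n * f n ≤ 0 := fun n hn =>
      mul_nonpos_of_nonneg_of_nonpos (hc n (mem_filter.1 hn).1) (mem_filter.1 hn).2.le
    have hd : ∑ n ∈ N, c n * f n = 0 := le_antisymm (sum_nonpos hterm) <| by
      simpa only [map_add, map_sum, map_smul, smul_eq_mul, ← he0, zero_add] using hfx
    have hXN : ∑ n ∈ N, c n • n = 0 := sum_eq_zero fun n hn => by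
      have hcn := (sum_eq_zero_iff_of_nonpos hterm).1 hd n hn
      rw [(mul_eq_zero.1 hcn).resolve_right (mem_filter.1 hn).2.ne, zero_smul]
    rwa [hXN, add_zero]
  · rw [← inv_smul_smul₀ hepos.ne' (_ + _), f.smul_sum_add_sum_eq_sum_pairs]
    refine smul_mem _ (inv_nonneg.2 he) (add_mem (smul_mem _ hfx hXP) ?_)
    refine Submodule.sum_mem _ fun n hn => Submodule.sum_mem _ fun p hp => ?_
    refine smul_mem _ (mul_nonneg (hc n (mem_filter.1 hn).1) (hc p (mem_filter.1 hp).1))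
      (subset_hull ?_)
    exact mem_union_right _ (mem_image₂_of_mem hn hp)

theorem hull_range_single_one {ι : Type*} [Fintype ι] [DecidableEq ι] :
    hull 𝕜 (Set.range fun i => (Pi.single i 1 : ι → 𝕜)) = positive 𝕜 (ι → 𝕜) := by
  apply le_antisymm
  · exact Submodule.span_le.2 (Set.range_subset_iff.2 fun i => Pi.single_nonneg.2 zero_le_one)
  · intro y (hy : 0 ≤ y)
    rw [← univ_sum_single y]
    refine Submodule.sum_mem _ fun i _ => ?_
    rw [← mul_one (y i), ← smul_eq_mul, Pi.single_smul']
    exact smul_mem _ (hy i) (subset_hull ⟨i, rfl⟩)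

end PointedCone

open PointedCone

def rationalPoints (ι : Type*) : Set (ι → ℝ) := Set.range fun q : ι → ℚ => fun i => (q i : ℝ)

theorem exists_finset_rationalPoints_hull_eq {ι : Type*} [Fintype ι] (A : Finset (ι → ℚ)) :
    ∃ G : Finset (ι → ℝ), (G : Set (ι → ℝ)) ⊆ rationalPoints ι ∧
      (hull ℝ (G : Set (ι → ℝ)) : Set (ι → ℝ)) =
        {y | 0 ≤ y ∧ ∀ a ∈ A, 0 ≤ ∑ i, y i * (a i : ℝ)} := by
  classical
  induction A using Finset.induction_on with
  | empty =>
    refine ⟨univ.image fun i => Pi.single i 1, ?_, ?_⟩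
    · intro g hg
      obtain ⟨i, -, rfl⟩ := mem_image.1 hg
      refine ⟨Pi.single i 1, funext fun j => ?_⟩
      rcases eq_or_ne j i with rfl | hji <;> simp [*]
    · rw [coe_image, coe_univ, Set.image_univ, hull_range_single_one]
      ext
      simp
  | insert a A _ ih =>
    obtain ⟨G, hGrat, hG⟩ := ih
    let f := Fintype.linearCombination ℝ fun i => (a i : ℝ)
    refine ⟨halfspaceGens f G, coe_halfspaceGens_subset hGrat ?_, ?_⟩
    · rintro _ ⟨u, rfl⟩ _ ⟨v, rfl⟩
      refine ⟨(∑ i, v i * a i) • u - (∑ i, u i * a i) • v, ?_⟩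
      ext
      simp [f, Fintype.linearCombination_apply]
    · rw [hull_halfspaceGens, Submodule.coe_inf, hG]
      ext y
      simp only [f, Set.mem_inter_iff, Set.mem_ofPred_eq, forall_mem_insert, SetLike.mem_coe,
        mem_comap, mem_positive, Fintype.linearCombination_apply, smul_eq_mul]
      tauto

theorem nonneg_of_forall_le_add_mul {𝕜 : Type*} [Field 𝕜] [LinearOrder 𝕜] [IsStrictOrderedRing 𝕜]
    {a b c : 𝕜} (h : ∀ t, 0 ≤ t → c ≤ a + t * b) : 0 ≤ b := by
  by_contra! hb
  have hca := h 0 le_rfl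
  have ht := h ((a - c + 1) / -b) (div_nonneg (by linarith) (by linarith))
  rw [div_mul_eq_mul_div, mul_div_assoc, div_neg, div_self hb.ne] at ht
  linarith

section Polyhedra

variable {ι : Type*}

def upperHull (P : Set (ι → ℝ)) : Set (ι → ℝ) :=
  {x | ∃ p ∈ convexHull ℝ P, ∃ z : ι → ℝ, (∀ i, 0 ≤ z i) ∧ x = z + p}

def polyhedron [Fintype ι] {κ : Type*} (A : κ → ι → ℚ) (b : κ → ℚ) : Set (ι → ℝ) :=
  {x | ∀ j, (b j : ℝ) ≤ ∑ i, (A j i : ℝ) * x i}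

def blockingPolyhedron [Fintype ι] {κ : Type*} (D : Matrix ι κ ℚ) : Set (ι → ℝ) :=
  {x | (∀ i, 0 ≤ x i) ∧ ∀ j, (1 : ℝ) ≤ ∑ i, x i * (D i j : ℝ)}

theorem isUpperSet_upperHull (P : Set (ι → ℝ)) : IsUpperSet (upperHull P) := by
  rintro x y hxy ⟨p, hp, z, hz, rfl⟩
  exact ⟨p, hp, y - p, sub_nonneg.2 ((le_add_of_nonneg_left hz).trans hxy),
    (sub_add_cancel y p).symm⟩

theorem upperHull_subset_nonneg {P : Set (ι → ℝ)} (hP : P ⊆ Set.Ici 0) :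
    upperHull P ⊆ Set.Ici 0 := by
  rintro _ ⟨p, hp, z, hz, rfl⟩
  exact add_nonneg hz (Set.mem_Ici.1 (convexHull_min hP (convex_Ici 0) hp))

theorem upperHull_subset {P Q : Set (ι → ℝ)} (hQ : Convex ℝ Q) (hQup : IsUpperSet Q)
    (hPQ : P ⊆ Q) : upperHull P ⊆ Q := by
  rintro _ ⟨p, hp, z, hz, rfl⟩
  exact hQup (le_add_of_nonneg_left hz) (convexHull_min hPQ hQ hp)

variable [Fintype ι] {κ : Type*}

theorem isUpperSet_blockingPolyhedron {D : Matrix ι κ ℚ} (hD : ∀ i j, 0 ≤ D i j) :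
    IsUpperSet (blockingPolyhedron D) := by
  rintro x y hxy ⟨hx, hxD⟩
  refine ⟨fun i => (hx i).trans (hxy i), fun j => (hxD j).trans (sum_le_sum fun i _ => ?_)⟩
  exact mul_le_mul_of_nonneg_right (hxy i) (Rat.cast_nonneg.2 (hD i j))

theorem convex_blockingPolyhedron (D : Matrix ι κ ℚ) : Convex ℝ (blockingPolyhedron D) := by
  rintro x ⟨hx, hxD⟩ y ⟨hy, hyD⟩ a b ha hb hab
  refine ⟨fun i => ?_, fun j => ?_⟩
  · simp only [Pi.add_apply, Pi.smul_apply, smul_eq_mul]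
    exact add_nonneg (mul_nonneg ha (hx i)) (mul_nonneg hb (hy i))
  · simp only [Pi.add_apply, Pi.smul_apply, smul_eq_mul, add_mul, sum_add_distrib, mul_assoc,
      ← mul_sum]
    nlinarith [hxD j, hyD j]

theorem coeff_nonneg_of_isUpperSet {A : κ → ι → ℚ} {b : κ → ℚ}
    (hup : IsUpperSet (polyhedron A b)) (hne : (polyhedron A b).Nonempty) (j : κ) (i : ι) :
    0 ≤ A j i := by
  classical
  obtain ⟨x, hx⟩ := hne
  refine Rat.cast_nonneg.1
    (nonneg_of_forall_le_add_mul (a := ∑ i, (A j i : ℝ) * x i) (c := b j) fun t ht => ?_)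
  have hmem := hup (le_add_of_nonneg_right (Pi.single_nonneg.2 ht : 0 ≤ Pi.single i t)) hx j
  simpa [mul_add, sum_add_distrib, Pi.single_apply, mul_comm t] using hmem

theorem exists_blockingPolyhedron_eq {s k : ℕ} {A : Fin k → Fin s → ℚ} {b : Fin k → ℚ}
    (hsub : polyhedron A b ⊆ Set.Ici 0) (hup : IsUpperSet (polyhedron A b)) :
    ∃ (m : ℕ) (D : Matrix (Fin s) (Fin m) ℚ), (∀ i j, 0 ≤ D i j) ∧
      polyhedron A b = blockingPolyhedron D := by
  rcases (polyhedron A b).eq_empty_or_nonempty with hQ | hne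
  · refine ⟨1, 0, fun _ _ => le_rfl, hQ.trans (Set.eq_empty_of_forall_notMem fun x hx => ?_).symm⟩
    have h := hx.2 0
    simp only [Matrix.zero_apply, Rat.cast_zero, mul_zero, sum_const_zero] at h
    linarith
  have hA := coeff_nonneg_of_isUpperSet hup hne
  let e := Fintype.equivFin {j // 0 < b j}
  refine ⟨Fintype.card {j // 0 < b j}, fun i j => A (e.symm j) i / b (e.symm j),
    fun i j => div_nonneg (hA _ _) (e.symm j).2.le, ?_⟩
  have hscale (j : Fin k) (x : Fin s → ℝ) (hb : 0 < b j) :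
      (b j : ℝ) ≤ ∑ i, (A j i : ℝ) * x i ↔ 1 ≤ ∑ i, x i * ((A j i / b j : ℚ) : ℝ) := by
    have hb' : (0 : ℝ) < b j := by exact_mod_cast hb
    rw [← one_le_div hb', sum_div]
    simp only [Rat.cast_div, mul_div_assoc', mul_comm]
  ext x
  constructor
  · intro hx
    exact ⟨hsub hx, fun j => (hscale _ x (e.symm j).2).1 (hx _)⟩
  · rintro ⟨hx0, hxD⟩ j
    by_cases hb : 0 < b j
    · have h := hxD (e ⟨j, hb⟩)
      simp only [Equiv.symm_apply_apply] at h
      exact (hscale j x hb).2 h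
    · exact (Rat.cast_nonpos.2 (not_lt.1 hb)).trans
        (sum_nonneg fun i _ => mul_nonneg (Rat.cast_nonneg.2 (hA j i)) (hx0 i))

end Polyhedra

theorem mem_upperHull_of_cons_one_mem_hull {n : ℕ} {G : Finset (Fin (n + 1) → ℝ)}
    (hG : ∀ g ∈ G, 0 ≤ g) {x : Fin n → ℝ}
    (hx : (Fin.cons 1 x : Fin (n + 1) → ℝ) ∈ hull ℝ (G : Set (Fin (n + 1) → ℝ))) :
    x ∈ upperHull ↑({g ∈ G | 0 < g 0}.image fun g => (g 0)⁻¹ • Fin.tail g) := by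
  classical
  obtain ⟨c, hc, hcx⟩ := mem_hull_finset_iff.1 hx
  have hsplit (v : (Fin (n + 1) → ℝ) → ℝ) :
      ∑ g ∈ G, v g = ∑ g ∈ G with 0 < g 0, v g + ∑ g ∈ G with ¬ 0 < g 0, v g :=
    (sum_filter_add_sum_filter_not G _ v).symm
  have hcoord (k : Fin (n + 1)) : ∑ g ∈ G, c g * g k = (Fin.cons 1 x : Fin (n + 1) → ℝ) k := by
    rw [← hcx, Finset.sum_apply]
    rfl
  have hvanish : ∑ g ∈ G with ¬ 0 < g 0, c g * g 0 = 0 := sum_eq_zero fun g hg => by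
    rw [mem_filter] at hg
    rw [le_antisymm (not_lt.1 hg.2) (hG g hg.1 0), mul_zero]
  refine ⟨∑ g ∈ G with 0 < g 0, (c g * g 0) • ((g 0)⁻¹ • Fin.tail g), ?_,
    ∑ g ∈ G with ¬ 0 < g 0, c g • Fin.tail g, fun i => ?_, funext fun i => ?_⟩
  · refine (convex_convexHull ℝ _).sum_mem (fun g hg => ?_) ?_ fun g hg => ?_
    · exact mul_nonneg (hc g (mem_filter.1 hg).1) (hG g (mem_filter.1 hg).1 0)
    · simpa only [hsplit, hvanish, add_zero, Fin.cons_zero] using hcoord 0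
    · exact subset_convexHull ℝ _ (mem_coe.2 (mem_image_of_mem _ hg))
  · simp only [Finset.sum_apply, Pi.smul_apply, smul_eq_mul, Fin.tail]
    exact sum_nonneg fun g hg => mul_nonneg (hc g (mem_filter.1 hg).1) (hG g (mem_filter.1 hg).1 _)
  · have hi := hcoord i.succ
    rw [hsplit, Fin.cons_succ] at hi
    rw [← hi, add_comm]
    simp only [Pi.add_apply, Finset.sum_apply, Pi.smul_apply, smul_eq_mul, Fin.tail]
    congr 1
    refine sum_congr rfl fun g hg => ?_
    field_simp [(mem_filter.1 hg).2.ne']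

theorem exists_range_eq_of_subset_rationalPoints {ι : Type*} {S : Finset (ι → ℝ)}
    (hS : (S : Set (ι → ℝ)) ⊆ rationalPoints ι) :
    ∃ (r : ℕ) (α : Fin r → ι → ℚ), Set.range (fun j i => (α j i : ℝ)) = S := by
  classical
  rw [rationalPoints, ← Set.image_univ] at hS
  obtain ⟨S', -, rfl⟩ := subset_set_image_iff.1 hS
  refine ⟨S'.card, fun j => (S'.equivFin.symm j : ι → ℚ), ?_⟩
  ext y
  simp only [Set.mem_range, coe_image, Set.mem_image, mem_coe]
  constructor
  · rintro ⟨j, rfl⟩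
    exact ⟨_, (S'.equivFin.symm j).2, rfl⟩
  · rintro ⟨q, hq, rfl⟩
    exact ⟨S'.equivFin ⟨q, hq⟩, by simp⟩

theorem exists_blockingPolyhedron_eq_upperHull {s m : ℕ} (D : Matrix (Fin s) (Fin m) ℚ)
    (hD : ∀ i j, 0 ≤ D i j) :
    ∃ (r : ℕ) (α : Fin r → Fin s → ℚ), (∀ j i, 0 ≤ α j i) ∧
      blockingPolyhedron D = upperHull (Set.range fun j i => (α j i : ℝ)) := by
  classical
  obtain ⟨G, hGrat, hG⟩ := exists_finset_rationalPoints_hull_eq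
    (univ.image fun j => (Fin.cons (-1) fun i => D i j : Fin (s + 1) → ℚ))
  have hK (y : Fin (s + 1) → ℝ) :
      y ∈ hull ℝ (G : Set (Fin (s + 1) → ℝ)) ↔ 0 ≤ y ∧ ∀ j, y 0 ≤ ∑ i, y i.succ * D i j := by
    rw [← SetLike.mem_coe, hG]
    simp [Fin.sum_univ_succ]
  have hcons (x : Fin s → ℝ) :
      (Fin.cons 1 x : Fin (s + 1) → ℝ) ∈ hull ℝ (G : Set (Fin (s + 1) → ℝ)) ↔
        x ∈ blockingPolyhedron D := by
    simp [hK, blockingPolyhedron, Fin.forall_fin_succ, Pi.le_def]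
  set N := {g ∈ G | 0 < g 0}.image fun g => (g 0)⁻¹ • Fin.tail g
  have hNQ : ↑N ⊆ blockingPolyhedron D := by
    intro x hx
    obtain ⟨g, hg, rfl⟩ := mem_image.1 hx
    rw [mem_filter] at hg
    have hcons_g : (Fin.cons 1 ((g 0)⁻¹ • Fin.tail g) : Fin (s + 1) → ℝ) = (g 0)⁻¹ • g := by
      ext k
      refine Fin.cases ?_ (fun i => ?_) k <;> simp [hg.2.ne', Fin.tail]
    rw [← hcons, hcons_g]
    exact smul_mem _ (inv_nonneg.2 hg.2.le) (subset_hull hg.1)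
  have hNrat : ↑N ⊆ rationalPoints (Fin s) := by
    intro x hx
    obtain ⟨g, hg, rfl⟩ := mem_image.1 hx
    obtain ⟨q, rfl⟩ := hGrat (mem_filter.1 hg).1
    exact ⟨(q 0)⁻¹ • Fin.tail q, by ext; simp [Fin.tail]⟩
  obtain ⟨r, α, hα⟩ := exists_range_eq_of_subset_rationalPoints hNrat
  refine ⟨r, α, fun j i => ?_, ?_⟩
  · exact Rat.cast_nonneg.1 ((hNQ (hα ▸ Set.mem_range_self j)).1 i)
  · rw [hα]
    refine subset_antisymm (fun x hx => ?_)
      (upperHull_subset (convex_blockingPolyhedron D) (isUpperSet_blockingPolyhedron hD) hNQ)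
    exact mem_upperHull_of_cons_one_mem_hull (fun g hg => ((hK g).1 (subset_hull hg)).1)
      ((hcons x).2 hx)

/-- Characterization of rational polyhedra of blocking (covering) type:
(a) `Q ⊆ ℝ_+^s` and upward closed; (b) `Q = ℝ_+^s + conv(α_1,...,α_r)` with the `α_i`
non-negative rational; (c) `Q = {x : x ≥ 0, xD ≥ 1}` for a non-negative rational matrix `D`. -/
theorem stmt8 {s : ℕ} (Q : Set (Fin s → ℝ)) (hQ : IsRationalPolyhedron Q) :
    ((Q ⊆ {x | ∀ i, 0 ≤ x i} ∧ ∀ x ∈ Q, ∀ y : Fin s → ℝ, (∀ i, x i ≤ y i) → y ∈ Q) ↔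
      (∃ (r : ℕ) (α : Fin r → Fin s → ℚ), (∀ j i, 0 ≤ α j i) ∧
        Q = {x | ∃ p ∈ convexHull ℝ (Set.range fun j => fun i => ((α j i : ℝ))),
          ∃ z : Fin s → ℝ, (∀ i, 0 ≤ z i) ∧ x = z + p})) ∧
    ((∃ (r : ℕ) (α : Fin r → Fin s → ℚ), (∀ j i, 0 ≤ α j i) ∧
        Q = {x | ∃ p ∈ convexHull ℝ (Set.range fun j => fun i => ((α j i : ℝ))),
          ∃ z : Fin s → ℝ, (∀ i, 0 ≤ z i) ∧ x = z + p}) ↔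
      (∃ (m : ℕ) (D : Matrix (Fin s) (Fin m) ℚ), (∀ i j, 0 ≤ D i j) ∧
        Q = {x | (∀ i, 0 ≤ x i) ∧ ∀ j, (1 : ℝ) ≤ ∑ i, x i * (D i j : ℝ)})) := by
  have upper_iff : IsUpperSet Q ↔ ∀ x ∈ Q, ∀ y : Fin s → ℝ, (∀ i, x i ≤ y i) → y ∈ Q :=
    ⟨fun h x hx _ hxy => h hxy hx, fun h x _ hxy hx => h x hx _ hxy⟩
  have a_to_c : Q ⊆ Set.Ici 0 → IsUpperSet Q → ∃ (m : ℕ) (D : Matrix (Fin s) (Fin m) ℚ),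
      (∀ i j, 0 ≤ D i j) ∧ Q = blockingPolyhedron D := by
    obtain ⟨k, A, b, rfl⟩ := hQ
    exact exists_blockingPolyhedron_eq
  have c_to_b : (∃ (m : ℕ) (D : Matrix (Fin s) (Fin m) ℚ),
      (∀ i j, 0 ≤ D i j) ∧ Q = blockingPolyhedron D) → ∃ (r : ℕ) (α : Fin r → Fin s → ℚ),
      (∀ j i, 0 ≤ α j i) ∧ Q = upperHull (Set.range fun j i => (α j i : ℝ)) := by
    rintro ⟨m, D, hD, rfl⟩
    exact exists_blockingPolyhedron_eq_upperHull D hD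
  have b_to_a : (∃ (r : ℕ) (α : Fin r → Fin s → ℚ), (∀ j i, 0 ≤ α j i) ∧
      Q = upperHull (Set.range fun j i => (α j i : ℝ))) → Q ⊆ Set.Ici 0 ∧ IsUpperSet Q := by
    rintro ⟨r, α, hα, rfl⟩
    refine ⟨upperHull_subset_nonneg ?_, isUpperSet_upperHull _⟩
    rintro _ ⟨j, rfl⟩ i
    exact Rat.cast_nonneg.2 (hα j i)
  exact ⟨⟨fun h => c_to_b (a_to_c h.1 (upper_iff.2 h.2)),
      fun h => (b_to_a h).imp_right upper_iff.1⟩,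
    ⟨fun h => a_to_c (b_to_a h).1 (b_to_a h).2, c_to_b⟩⟩
end

section
/- Let {I_n} be the filtration associated to a covering polyhedron Q(C), with Rees algebra R(F) = ⊕_{n≥0} I_n z^n ⊂ S[z], and let H be the Hilbert basis of the Simis cone SC(Q(C)). Then R(F) equals the semigroup ring K[ℕH] = K[{t^a z^n : (a,n) ∈ ℕH}], and R(F) is a normal, finitely generated K-algebra. -/
open MvPolynomial

noncomputable section

/-- An integral vector of `ℝ^{s+1}` lying in the Simis cone `SC(Q(C))`. -/
def memSCZ {s m : ℕ} (C : Matrix (Fin s) (Fin m) ℚ) (p : (Fin s → ℤ) × ℤ) : Prop :=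
  (∀ i, 0 ≤ p.1 i) ∧ 0 ≤ p.2 ∧ ∀ j, (p.2 : ℚ) ≤ ∑ i, (p.1 i : ℚ) * C i j

/-- Membership in the Hilbert basis of the Simis cone. -/
def hilbMem {s m : ℕ} (C : Matrix (Fin s) (Fin m) ℚ) (γ : (Fin s → ℤ) × ℤ) : Prop :=
  γ ≠ 0 ∧ memSCZ C γ ∧
    ¬ ∃ u v : (Fin s → ℤ) × ℤ, memSCZ C u ∧ memSCZ C v ∧ u ≠ 0 ∧ v ≠ 0 ∧ γ = u + v

/-- The monomials `t^a z^n` of `S[z]` whose exponent vector `(a,n)` belongs to the Hilbert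
basis of the Simis cone. -/
def reesGen (K : Type*) [Field K] {s m : ℕ} (C : Matrix (Fin s) (Fin m) ℚ) :
    Set (Polynomial (MvPolynomial (Fin s) K)) :=
  {f | ∃ (a : Fin s →₀ ℕ) (n : ℕ), hilbMem C (fun i => (a i : ℤ), (n : ℤ)) ∧
    f = Polynomial.C (monomial a 1) * Polynomial.X ^ n}

/-!
Write `K[t, z]` for `MvPolynomial (Option (Fin s)) K`, with `z = X none`, so that `S[z]` is
`K[t, z]` through `optionEquivLeft`. A polynomial lies in `R(F)` iff each of its exponents `(a, n)`
satisfies `n ≤ ⟨a, c_j⟩` for all `j`, i.e. iff it is supported on the monoid `T` of lattice points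
of the Simis cone. Hence `R(F) = K[T]`, and `T` is generated by its irreducible elements, which form
`H`. Gordan's lemma (Dickson's lemma, after clearing denominators) makes `T` finitely generated.
Each column `c_j` gives a monomial weight; the lowest-weight part of a product is the product of
the lowest-weight parts, so an element integral over `K[T]` has no monomial of negative weight.
Thus `K[T]` is integrally closed in the normal domain `K[t, z]`, hence normal.
-/

lemma exists_pos_nat_mul_eq_intCast {ι : Type*} [Finite ι] (q : ι → ℚ) :
    ∃ L : ℕ, 0 < L ∧ ∃ z : ι → ℤ, ∀ i, (L : ℚ) * q i = z i := by
  classical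
  cases nonempty_fintype ι
  refine ⟨∏ i, (q i).den, Finset.prod_pos fun i _ => (q i).den_pos,
    fun i => (q i).num * ((∏ j, (q j).den) / (q i).den : ℕ), fun i => ?_⟩
  obtain ⟨c, hc⟩ := Finset.dvd_prod_of_mem (fun j => (q j).den) (Finset.mem_univ i)
  show (_ : ℚ) * q i = ((q i).num * ((∏ j, (q j).den) / (q i).den : ℕ) : ℤ)
  rw [hc, Nat.mul_div_cancel_left _ (q i).den_pos]
  push_cast
  rw [← Rat.mul_den_eq_num]
  ring

namespace Finsupp

variable {σ ι : Type*}

section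

variable {Γ : Type*} [AddCommMonoid Γ] [PartialOrder Γ] [IsOrderedAddMonoid Γ]

/-- The lattice points of the cone cut out by the linear forms `weight (w j)`. -/
def nonnegWeightSubmonoid (w : ι → σ → Γ) : AddSubmonoid (σ →₀ ℕ) :=
  ⨅ j, (AddSubmonoid.nonneg Γ).comap (weight (w j))

lemma mem_nonnegWeightSubmonoid {w : ι → σ → Γ} {d : σ →₀ ℕ} :
    d ∈ nonnegWeightSubmonoid w ↔ ∀ j, 0 ≤ weight (w j) d := by
  simp [nonnegWeightSubmonoid]

end

/-- **Gordan's lemma**, for integral linear forms: the pairs `(d, y)` with `y j = weight (w j) d`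
form a subtractive submonoid of `ℕ^σ × ℕ^ι`, whose projection to `ℕ^σ` is the cone. -/
theorem nonnegWeightSubmonoid_fg_of_int [Finite σ] [Finite ι] (w : ι → σ → ℤ) :
    (nonnegWeightSubmonoid w).FG := by
  let f : (σ →₀ ℕ) × (ι → ℕ) →+ (ι → ℤ) :=
    (AddMonoidHom.pi fun j => weight (w j)).comp (AddMonoidHom.fst _ _)
  let g : (σ →₀ ℕ) × (ι → ℕ) →+ (ι → ℤ) :=
    (AddMonoidHom.pi fun j => (Nat.castAddMonoidHom ℤ).comp (Pi.evalAddMonoidHom _ j)).comp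
      (AddMonoidHom.snd _ _)
  convert (AddSubmonoid.fg_eqLocusM f g).map (AddMonoidHom.fst _ _)
  ext d
  simp only [mem_nonnegWeightSubmonoid, AddSubmonoid.mem_map, AddMonoidHom.mem_eqLocusM]
  constructor
  · intro hd
    refine ⟨(d, fun j => (weight (w j) d).toNat), ?_, rfl⟩
    ext j
    simp [f, g, Int.toNat_of_nonneg (hd j)]
  · rintro ⟨⟨d, y⟩, hdy, rfl⟩ j
    have hj := congr_fun hdy j
    simp only [AddMonoidHom.coe_comp, Function.comp_apply, AddMonoidHom.coe_fst,
      AddMonoidHom.coe_snd, AddMonoidHom.pi_apply, f, g] at hj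
    simp [hj]

/-- **Gordan's lemma**. -/
theorem nonnegWeightSubmonoid_fg [Finite σ] [Finite ι] (w : ι → σ → ℚ) :
    (nonnegWeightSubmonoid w).FG := by
  obtain ⟨L, hL, z, hz⟩ := exists_pos_nat_mul_eq_intCast fun p : ι × σ => w p.1 p.2
  convert nonnegWeightSubmonoid_fg_of_int fun j o => z (j, o) using 1
  ext d
  simp only [mem_nonnegWeightSubmonoid]
  refine forall_congr' fun j => ?_
  have : (weight (fun o => z (j, o)) d : ℚ) = L * weight (w j) d := by
    simp [weight_apply, Finsupp.sum, Finset.mul_sum, ← hz, mul_left_comm]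
  rw [← mul_nonneg_iff_of_pos_left (c := (L : ℚ)) (by exact_mod_cast hL), ← this,
    Int.cast_nonneg_iff]

end Finsupp

namespace AddSubmonoid

variable {M : Type*} [AddCommMonoid M]

/-- The irreducible elements of `P`; for a positive affine monoid such as a submonoid of `ℕ^σ`,
this is its Hilbert basis. -/
def hilbertBasis (P : AddSubmonoid M) : Set M :=
  {x | x ∈ P ∧ x ≠ 0 ∧ ∀ u ∈ P, ∀ v ∈ P, x = u + v → u = 0 ∨ v = 0}

theorem closure_hilbertBasis [PartialOrder M] [IsOrderedCancelAddMonoid M] [CanonicallyOrderedAdd M]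
    [WellFoundedLT M] (P : AddSubmonoid M) : closure P.hilbertBasis = P := by
  refine le_antisymm (closure_le.2 fun x hx => hx.1) fun x => ?_
  induction x using WellFoundedLT.induction with
  | _ x ih =>
  intro hx
  by_cases hx0 : x = 0
  · exact hx0 ▸ zero_mem _
  by_cases hxH : ∀ u ∈ P, ∀ v ∈ P, x = u + v → u = 0 ∨ v = 0
  · exact subset_closure ⟨hx, hx0, hxH⟩
  push Not at hxH
  obtain ⟨u, hu, v, hv, rfl, hu0, hv0⟩ := hxH
  exact add_mem (ih u (lt_add_of_pos_right u (pos_iff_ne_zero.2 hv0)) hu)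
    (ih v (lt_add_of_pos_left v (pos_iff_ne_zero.2 hu0)) hv)

end AddSubmonoid

namespace MvPolynomial

section RestrictSupportSubalgebra

variable {R σ : Type*} [CommSemiring R]

variable (R) in
def restrictSupportSubalgebra (P : AddSubmonoid (σ →₀ ℕ)) : Subalgebra R (MvPolynomial σ R) :=
  (restrictSupport R P).toSubalgebra
    (by rw [← C_1, ← monomial_zero']; exact (monomial_mem_restrictSupport R).2 (Or.inl P.zero_mem))
    fun x y hx hy =>
      restrictSupport_mono R (Set.add_subset_iff.2 fun _ hu _ hv => P.add_mem hu hv)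
        (restrictSupport_add R (P : Set (σ →₀ ℕ)) P ▸ Submodule.mul_mem_mul hx hy)

lemma mem_restrictSupportSubalgebra {P : AddSubmonoid (σ →₀ ℕ)} {p : MvPolynomial σ R} :
    p ∈ restrictSupportSubalgebra R P ↔ ↑p.support ⊆ (P : Set (σ →₀ ℕ)) :=
  Iff.rfl

lemma adjoin_monomial_eq_restrictSupportSubalgebra (B : Set (σ →₀ ℕ)) :
    Algebra.adjoin R ((monomial · (1 : R)) '' B) =
      restrictSupportSubalgebra R (AddSubmonoid.closure B) := by
  refine le_antisymm (Algebra.adjoin_le ?_) fun p hp => ?_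
  · rintro _ ⟨b, hb, rfl⟩
    exact (monomial_mem_restrictSupport R).2 (Or.inl (AddSubmonoid.subset_closure hb))
  · change p ∈ restrictSupport R _ at hp
    rw [restrictSupport_eq_span] at hp
    show p ∈ Subalgebra.toSubmodule (Algebra.adjoin R _)
    refine Submodule.span_le.2 ?_ hp
    rintro _ ⟨d, hd, rfl⟩
    show monomial d (1 : R) ∈ Algebra.adjoin R ((monomial · (1 : R)) '' B)
    induction hd using AddSubmonoid.closure_induction with
    | mem b hb => exact Algebra.subset_adjoin ⟨b, hb, rfl⟩
    | zero => rw [monomial_zero', C_1]; exact one_mem _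
    | add x y _ _ hx hy =>
      rw [show monomial (x + y) (1 : R) = monomial x 1 * monomial y 1 by rw [monomial_mul, one_mul]]
      exact mul_mem hx hy

lemma restrictSupportSubalgebra_fg {P : AddSubmonoid (σ →₀ ℕ)} (hP : P.FG) :
    (restrictSupportSubalgebra R P).FG := by
  classical
  obtain ⟨B, rfl⟩ := hP
  rw [← adjoin_monomial_eq_restrictSupportSubalgebra]
  exact ⟨B.image (monomial · 1), by rw [Finset.coe_image]⟩

end RestrictSupportSubalgebra

section Weight

variable {R σ Γ : Type*} [CommRing R] [AddCommGroup Γ] [LinearOrder Γ] [IsOrderedAddMonoid Γ]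
  (w : σ → Γ)

lemma mul_mem_restrictSupport_le_weight {a b : Γ} {p q : MvPolynomial σ R}
    (hp : p ∈ restrictSupport R {d | a ≤ Finsupp.weight w d})
    (hq : q ∈ restrictSupport R {d | b ≤ Finsupp.weight w d}) :
    p * q ∈ restrictSupport R {d | a + b ≤ Finsupp.weight w d} :=
  restrictSupport_mono R (Set.add_subset_iff.2 fun u hu v hv => by
      simpa only [Set.mem_ofPred_eq, map_add] using add_le_add hu hv)
    (restrictSupport_add R _ _ ▸ Submodule.mul_mem_mul hp hq)

lemma pow_mem_restrictSupport_le_weight {a : Γ} {p : MvPolynomial σ R}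
    (hp : p ∈ restrictSupport R {d | a ≤ Finsupp.weight w d}) (k : ℕ) :
    p ^ k ∈ restrictSupport R {d | k • a ≤ Finsupp.weight w d} := by
  induction k with
  | zero =>
    rw [pow_zero, ← C_1, ← monomial_zero']
    exact (monomial_mem_restrictSupport R).2 (Or.inl (by simp))
  | succ k ih => simpa only [pow_succ, succ_nsmul] using mul_mem_restrictSupport_le_weight w ih hp

/-- The lowest weighted homogeneous component is multiplicative. -/
lemma weightedHomogeneousComponent_mul_of_mem_restrictSupport {a b : Γ} {p q : MvPolynomial σ R}
    (hp : p ∈ restrictSupport R {d | a ≤ Finsupp.weight w d})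
    (hq : q ∈ restrictSupport R {d | b ≤ Finsupp.weight w d}) :
    weightedHomogeneousComponent w (a + b) (p * q) =
      weightedHomogeneousComponent w a p * weightedHomogeneousComponent w b q := by
  classical
  ext d
  rw [coeff_weightedHomogeneousComponent]
  split_ifs with hd
  · rw [coeff_mul, coeff_mul]
    refine Finset.sum_congr rfl fun ⟨e, f⟩ hef => ?_
    rw [Finset.HasAntidiagonal.mem_antidiagonal] at hef
    simp only [coeff_weightedHomogeneousComponent]
    by_cases he : Finsupp.weight w e = a
    · have hf : Finsupp.weight w f = b := by
        rw [← hef, map_add, he] at hd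
        exact add_left_cancel hd
      rw [if_pos he, if_pos hf]
    · rw [if_neg he, zero_mul]
      by_contra hne
      have hlt := add_lt_add_of_lt_of_le
        (lt_of_le_of_ne (hp (mem_support_iff.2 (left_ne_zero_of_mul hne))) (Ne.symm he))
        (hq (mem_support_iff.2 (right_ne_zero_of_mul hne)))
      rw [← map_add, hef, hd] at hlt
      exact lt_irrefl _ hlt
  · exact (((weightedHomogeneousComponent_isWeightedHomogeneous a p).mul
      (weightedHomogeneousComponent_isWeightedHomogeneous b q)).coeff_eq_zero d hd).symm

lemma weightedHomogeneousComponent_pow_of_mem_restrictSupport {a : Γ} {p : MvPolynomial σ R}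
    (hp : p ∈ restrictSupport R {d | a ≤ Finsupp.weight w d}) (k : ℕ) :
    weightedHomogeneousComponent w (k • a) (p ^ k) = weightedHomogeneousComponent w a p ^ k := by
  induction k with
  | zero =>
    rw [pow_zero, pow_zero, zero_nsmul]
    exact (isWeightedHomogeneous_one (R := R) w).weightedHomogeneousComponent_same
  | succ k ih =>
    rw [pow_succ, pow_succ, succ_nsmul, weightedHomogeneousComponent_mul_of_mem_restrictSupport w
      (pow_mem_restrictSupport_le_weight w hp k) hp, ih]

/-- Compare the components of weight `k • v` in an integral equation of degree `k`, where `v` is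
the least weight of a monomial of `p`. -/
theorem mem_restrictSupport_weight_nonneg_of_isIntegral [IsDomain R] {A : Type*} [CommRing A]
    [Algebra A (MvPolynomial σ R)]
    (hA : ∀ x : A, algebraMap A _ x ∈ restrictSupport R {d | 0 ≤ Finsupp.weight w d})
    {p : MvPolynomial σ R} (hp : IsIntegral A p) :
    p ∈ restrictSupport R {d | 0 ≤ Finsupp.weight w d} := by
  classical
  obtain ⟨q, hq, hqp⟩ := hp
  by_contra hneg
  obtain ⟨d₀, hd₀, hd₀neg⟩ := Set.not_subset.1 hneg
  obtain ⟨d, hd, hmin⟩ := p.support.exists_min_image (Finsupp.weight w) ⟨d₀, hd₀⟩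
  set v := Finsupp.weight w d
  have hv : v < 0 := (hmin d₀ hd₀).trans_lt (not_le.1 hd₀neg)
  have hpv : p ∈ restrictSupport R {e | v ≤ Finsupp.weight w e} := fun e he => hmin e he
  have hlow : weightedHomogeneousComponent w v p ≠ 0 := by
    have : coeff d (weightedHomogeneousComponent w v p) = coeff d p := by
      rw [coeff_weightedHomogeneousComponent, if_pos rfl]
    exact fun h => mem_support_iff.1 hd (by rw [← this, h, coeff_zero])
  have key : weightedHomogeneousComponent w (q.natDegree • v) (q.eval₂ (algebraMap A _) p) =
      weightedHomogeneousComponent w v p ^ q.natDegree := by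
    rw [Polynomial.eval₂_eq_sum_range, Finset.sum_range_succ, hq.coeff_natDegree, map_one,
      one_mul, map_add, weightedHomogeneousComponent_pow_of_mem_restrictSupport w hpv, map_sum,
      Finset.sum_eq_zero, zero_add]
    intro i hi
    refine weightedHomogeneousComponent_eq_zero' _ _ fun e he => ne_of_gt ?_
    have hie : i • v ≤ Finsupp.weight w e := by
      simpa using mul_mem_restrictSupport_le_weight w (hA _)
        (pow_mem_restrictSupport_le_weight w hpv i) he
    refine lt_of_lt_of_le ?_ hie
    simpa [smul_neg] using nsmul_lt_nsmul_left (neg_pos.2 hv) (Finset.mem_range.1 hi)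
  rw [hqp, map_zero] at key
  exact pow_ne_zero _ hlow key.symm

end Weight

section IntegrallyClosed

open Finsupp

variable {σ ι Γ : Type*} [AddCommGroup Γ] [LinearOrder Γ] [IsOrderedAddMonoid Γ]

instance isIntegrallyClosedIn_restrictSupportSubalgebra_nonnegWeightSubmonoid {R : Type*}
    [CommRing R] [IsDomain R] (w : ι → σ → Γ) :
    IsIntegrallyClosedIn (restrictSupportSubalgebra R (nonnegWeightSubmonoid w))
      (MvPolynomial σ R) := by
  refine isIntegrallyClosedIn_iff.2 ⟨Subtype.val_injective, fun {p} hp => ⟨⟨p, ?_⟩, rfl⟩⟩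
  intro d hd
  refine mem_nonnegWeightSubmonoid.2 fun j => ?_
  refine mem_restrictSupport_weight_nonneg_of_isIntegral (w j) (fun x e he => ?_) hp hd
  exact mem_nonnegWeightSubmonoid.1 (x.2 he) j

instance isIntegrallyClosed_restrictSupportSubalgebra_nonnegWeightSubmonoid {K : Type*} [Field K]
    (w : ι → σ → Γ) : IsIntegrallyClosed (restrictSupportSubalgebra K (nonnegWeightSubmonoid w)) :=
  .of_isIntegrallyClosed_of_isIntegrallyClosedIn _ (MvPolynomial σ K)

end IntegrallyClosed

end MvPolynomial

namespace CoveringPolyhedron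

open Finsupp

variable {s m : ℕ} (C : Matrix (Fin s) (Fin m) ℚ)

/-- Column `j` of `C` as a weight on `K[t, z]`, where `t_i = X (some i)` has weight `C i j` and
`z = X none` has weight `-1`. -/
def colWeight (j : Fin m) : Option (Fin s) → ℚ := fun o => o.elim (-1) (C · j)

lemma weight_colWeight (j : Fin m) (d : Option (Fin s) →₀ ℕ) :
    Finsupp.weight (colWeight C j) d = ∑ i, (d (some i) : ℚ) * C i j - d none := by
  rw [Finsupp.weight_apply, Finsupp.sum_fintype _ _ (by simp), Fintype.sum_option]
  simp [colWeight, sub_eq_neg_add]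

lemma mem_nonnegWeightSubmonoid_colWeight {d : Option (Fin s) →₀ ℕ} :
    d ∈ nonnegWeightSubmonoid (colWeight C) ↔
      ∀ j, (d none : ℚ) ≤ ∑ i, (d (some i) : ℚ) * C i j := by
  simp [mem_nonnegWeightSubmonoid, weight_colWeight]

/-- The exponent `(a, n)` of `t^a z^n`, in the coordinates of `ℤ^s × ℤ`. -/
def toIntPair : (Option (Fin s) →₀ ℕ) →+ (Fin s → ℤ) × ℤ :=
  (AddMonoidHom.pi fun i => (Nat.castAddMonoidHom ℤ).comp (Finsupp.applyAddHom (some i))).prod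
    ((Nat.castAddMonoidHom ℤ).comp (Finsupp.applyAddHom none))

lemma toIntPair_apply (d : Option (Fin s) →₀ ℕ) :
    toIntPair d = (fun i => (d (some i) : ℤ), (d none : ℤ)) :=
  rfl

lemma toIntPair_injective : Function.Injective (toIntPair (s := s)) := by
  intro d e h
  simp only [toIntPair_apply, Prod.mk.injEq, funext_iff, Nat.cast_inj] at h
  ext (_ | i)
  exacts [h.2, h.1 i]

lemma memSCZ_toIntPair {d : Option (Fin s) →₀ ℕ} :
    memSCZ C (toIntPair d) ↔ d ∈ nonnegWeightSubmonoid (colWeight C) := by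
  simp [memSCZ, toIntPair_apply, mem_nonnegWeightSubmonoid_colWeight]

lemma exists_toIntPair_eq {p : (Fin s → ℤ) × ℤ} (hp : memSCZ C p) : ∃ d, toIntPair d = p := by
  refine ⟨Finsupp.equivFunOnFinite.symm fun o => o.elim p.2.toNat fun i => (p.1 i).toNat, ?_⟩
  ext i <;> simp [toIntPair_apply, hp.1, hp.2.1]

lemma hilbMem_toIntPair {d : Option (Fin s) →₀ ℕ} :
    hilbMem C (toIntPair d) ↔ d ∈ (nonnegWeightSubmonoid (colWeight C)).hilbertBasis := by
  simp only [hilbMem, AddSubmonoid.hilbertBasis, Set.mem_ofPred_eq, memSCZ_toIntPair,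
    map_ne_zero_iff _ toIntPair_injective]
  constructor
  · rintro ⟨hd0, hd, hirr⟩
    refine ⟨hd, hd0, fun u hu v hv huv => ?_⟩
    by_contra! h
    exact hirr ⟨toIntPair u, toIntPair v, (memSCZ_toIntPair C).2 hu, (memSCZ_toIntPair C).2 hv,
      (map_ne_zero_iff _ toIntPair_injective).2 h.1, (map_ne_zero_iff _ toIntPair_injective).2 h.2,
      by rw [huv, map_add]⟩
  · rintro ⟨hd, hd0, hirr⟩
    refine ⟨hd0, hd, ?_⟩
    rintro ⟨_, _, hu, hv, hu0, hv0, huv⟩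
    obtain ⟨u, rfl⟩ := exists_toIntPair_eq C hu
    obtain ⟨v, rfl⟩ := exists_toIntPair_eq C hv
    rw [← map_add] at huv
    rcases hirr u ((memSCZ_toIntPair C).1 hu) v ((memSCZ_toIntPair C).1 hv)
      (toIntPair_injective huv) with rfl | rfl
    exacts [hu0 (map_zero _), hv0 (map_zero _)]

variable {C}

lemma memCP_div_iff {n : ℕ} (hn : n ≠ 0) (a : Fin s →₀ ℕ) :
    memCP C (fun i => (a i : ℚ) / n) ↔ ∀ j, (n : ℚ) ≤ ∑ i, (a i : ℚ) * C i j := by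
  have hn' : (0 : ℚ) < n := by exact_mod_cast Nat.pos_of_ne_zero hn
  simp only [memCP, div_mul_eq_mul_div, ← Finset.sum_div, one_le_div hn']
  exact and_iff_right fun i => by positivity

lemma mem_filtIdeal_iff {K : Type*} [Field K] (hC : ∀ i j, 0 ≤ C i j) {n : ℕ}
    {g : MvPolynomial (Fin s) K} :
    g ∈ filtIdeal K C n ↔ ∀ a ∈ g.support, ∀ j, (n : ℚ) ≤ ∑ i, (a i : ℚ) * C i j := by
  rcases eq_or_ne n 0 with rfl | hn
  · simpa [filtIdeal] using fun a _ j =>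
      Finset.sum_nonneg fun i _ => mul_nonneg (Nat.cast_nonneg _) (hC i j)
  have hgen : {f | ∃ a : Fin s →₀ ℕ, f = monomial a 1 ∧ memCP C (fun i => (a i : ℚ) / n)} =
      (monomial · (1 : K)) '' {a | ∀ j, (n : ℚ) ≤ ∑ i, (a i : ℚ) * C i j} := by
    ext f
    simp [memCP_div_iff hn, eq_comm, and_comm]
  rw [filtIdeal, if_neg hn, hgen, mem_ideal_span_monomial_image]
  refine forall₂_congr fun a _ => ⟨fun ⟨b, hb, hba⟩ j => (hb j).trans ?_, fun h => ⟨a, h, le_rfl⟩⟩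
  exact Finset.sum_le_sum fun i _ =>
    mul_le_mul_of_nonneg_right (by exact_mod_cast hba i) (hC i j)

lemma reesAlgebra_eq {K : Type*} [Field K] (hC : ∀ i j, 0 ≤ C i j) :
    {f : Polynomial (MvPolynomial (Fin s) K) | ∀ n, f.coeff n ∈ filtIdeal K C n} =
      ((restrictSupportSubalgebra K (nonnegWeightSubmonoid (colWeight C))).map
        (optionEquivLeft K (Fin s)).toAlgHom : Set _) := by
  ext f
  obtain ⟨g, rfl⟩ := (optionEquivLeft K (Fin s)).surjective f
  rw [Subalgebra.coe_map, AlgEquiv.coe_toAlgHom,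
    (optionEquivLeft K (Fin s)).injective.mem_set_image]
  simp only [Set.mem_ofPred_eq, mem_filtIdeal_iff hC, mem_support_coeff_optionEquivLeft,
    SetLike.mem_coe, mem_restrictSupportSubalgebra, Set.subset_def,
    mem_nonnegWeightSubmonoid_colWeight]
  constructor
  · intro h d hd
    rw [← Finsupp.optionElim_some d] at hd
    simpa using h (d none) d.some hd
  · intro h n a ha
    simpa using h _ ha

lemma reesGen_eq (K : Type*) [Field K] :
    reesGen K C = optionEquivLeft K (Fin s) ''
      ((monomial · (1 : K)) '' (nonnegWeightSubmonoid (colWeight C)).hilbertBasis) := by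
  ext f
  simp only [reesGen, Set.mem_ofPred_eq, Set.mem_image, ← hilbMem_toIntPair]
  constructor
  · rintro ⟨a, n, h, rfl⟩
    refine ⟨_, ⟨a.optionElim n, ?_, rfl⟩, ?_⟩
    · simpa [toIntPair_apply] using h
    · simp [optionEquivLeft_monomial, Polynomial.C_mul_X_pow_eq_monomial]
  · rintro ⟨_, ⟨d, h, rfl⟩, rfl⟩
    refine ⟨d.some, d none, by simpa [toIntPair_apply] using h, ?_⟩
    simp [optionEquivLeft_monomial, Polynomial.C_mul_X_pow_eq_monomial]

end CoveringPolyhedron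

theorem stmt13_general {K : Type*} [Field K] {s m : ℕ} (C : Matrix (Fin s) (Fin m) ℚ)
    (hC : ∀ i j, 0 ≤ C i j) :
    {f : Polynomial (MvPolynomial (Fin s) K) | ∀ n, f.coeff n ∈ filtIdeal K C n} =
        (Algebra.adjoin K (reesGen K C) : Set (Polynomial (MvPolynomial (Fin s) K))) ∧
      (Algebra.adjoin K (reesGen K C)).FG ∧
      IsIntegrallyClosed ↥(Algebra.adjoin K (reesGen K C)) := by
  have hadjoin : Algebra.adjoin K (reesGen K C) =
      (restrictSupportSubalgebra K
        (Finsupp.nonnegWeightSubmonoid (CoveringPolyhedron.colWeight C))).map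
        (optionEquivLeft K (Fin s)).toAlgHom := by
    rw [CoveringPolyhedron.reesGen_eq, ← AlgEquiv.coe_toAlgHom, ← AlgHom.map_adjoin,
      adjoin_monomial_eq_restrictSupportSubalgebra, AddSubmonoid.closure_hilbertBasis]
  rw [hadjoin]
  exact ⟨CoveringPolyhedron.reesAlgebra_eq hC,
    (restrictSupportSubalgebra_fg (Finsupp.nonnegWeightSubmonoid_fg _)).map _,
    .of_equiv ((optionEquivLeft K (Fin s)).subalgebraMap _).toRingEquiv⟩

/-- The Rees algebra `R(F) = ⊕ I_n z^n` of the filtration of a covering polyhedron equals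
the semigroup ring `K[ℕH]` (the `K`-algebra generated by the monomials with exponents in
the Hilbert basis `H` of the Simis cone), and it is a finitely generated normal
`K`-algebra. -/
theorem stmt13 {K : Type*} [Field K] {s m : ℕ} (C : Matrix (Fin s) (Fin m) ℚ)
    (hC : ∀ i j, 0 ≤ C i j) (hcol : ∀ j, ∃ i, C i j ≠ 0) :
    {f : Polynomial (MvPolynomial (Fin s) K) | ∀ n, f.coeff n ∈ filtIdeal K C n} =
        (Algebra.adjoin K (reesGen K C) : Set (Polynomial (MvPolynomial (Fin s) K))) ∧
      (Algebra.adjoin K (reesGen K C)).FG ∧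
      IsIntegrallyClosed ↥(Algebra.adjoin K (reesGen K C)) :=
  stmt13_general C hC
end
end

section
/- Let {I_n} be the filtration associated to a covering polyhedron Q(C). Then there exists an integer k ≥ 1 such that the Waldschmidt constant α̂(F) equals α_F(nk)/(nk) for all n ≥ 1. -/
open MvPolynomial

noncomputable section

lemma fm_core {κ : Type} [Fintype κ] (c B r : κ → ℚ)
    (h0 : ∀ k, c k = 0 → B k ≤ r k)
    (hpair : ∀ k k', 0 < c k → c k' < 0 → (-c k') * (B k - r k) ≤ c k * (r k' - B k')) :
    ∃ u : ℚ, ∀ k, B k ≤ c k * u + r k := by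
  classical
  set P : Finset κ := Finset.univ.filter (fun k => 0 < c k) with hP
  set N : Finset κ := Finset.univ.filter (fun k => c k < 0) with hN
  by_cases hPne : P.Nonempty
  · refine ⟨P.sup' hPne (fun k => (B k - r k) / c k), fun k => ?_⟩
    rcases lt_trichotomy (c k) 0 with hk | hk | hk
    · have hsup : P.sup' hPne (fun k' => (B k' - r k') / c k') ≤ (B k - r k) / c k := by
        apply Finset.sup'_le
        intro k' hk'
        have hk'pos : 0 < c k' := (Finset.mem_filter.mp hk').2
        have hp := hpair k' k hk'pos hk
        rw [show (B k - r k) / c k = (-(B k - r k)) / (-c k) from (neg_div_neg_eq _ _).symm,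
          div_le_div_iff₀ hk'pos (by linarith : (0:ℚ) < -c k)]
        nlinarith
      have hck : c k ≠ 0 := ne_of_lt hk
      have h2 := mul_le_mul_of_nonpos_left hsup (le_of_lt hk)
      rw [mul_div_cancel₀ _ hck] at h2
      linarith
    · have := h0 k hk; rw [hk]; linarith
    · have hle : (B k - r k) / c k ≤ P.sup' hPne (fun k' => (B k' - r k') / c k') :=
        Finset.le_sup' (f := fun k' => (B k' - r k') / c k')
          (Finset.mem_filter.mpr ⟨Finset.mem_univ _, hk⟩)
      have h2 := mul_le_mul_of_nonneg_left hle (le_of_lt hk)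
      rw [mul_div_cancel₀ _ (ne_of_gt hk)] at h2
      linarith
  · by_cases hNne : N.Nonempty
    · refine ⟨N.inf' hNne (fun k => (B k - r k) / c k), fun k => ?_⟩
      rcases lt_trichotomy (c k) 0 with hk | hk | hk
      · have hle : N.inf' hNne (fun k' => (B k' - r k') / c k') ≤ (B k - r k) / c k :=
          Finset.inf'_le (f := fun k' => (B k' - r k') / c k')
            (Finset.mem_filter.mpr ⟨Finset.mem_univ _, hk⟩)
        have h2 := mul_le_mul_of_nonpos_left hle (le_of_lt hk)
        rw [mul_div_cancel₀ _ (ne_of_lt hk)] at h2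
        linarith
      · have := h0 k hk; rw [hk]; linarith
      · exact absurd (Finset.mem_filter.mpr ⟨Finset.mem_univ k, hk⟩)
          (fun h => hPne ⟨k, h⟩)
    · refine ⟨0, fun k => ?_⟩
      rcases lt_trichotomy (c k) 0 with hk | hk | hk
      · exact absurd (Finset.mem_filter.mpr ⟨Finset.mem_univ k, hk⟩) (fun h => hNne ⟨k, h⟩)
      · have := h0 k hk; rw [hk]; linarith
      · exact absurd (Finset.mem_filter.mpr ⟨Finset.mem_univ k, hk⟩) (fun h => hPne ⟨k, h⟩)


lemma fm_eliminate {ι κ : Type} [Fintype ι] [Fintype κ]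
    (a d : κ → ℚ) (v : κ → ι → ℚ) (b : κ → ℚ) :
    ∃ (κ' : Type) (_ : Fintype κ') (a' : κ' → ℚ) (v' : κ' → ι → ℚ) (b' : κ' → ℚ),
      ∀ (t : ℚ) (x : ι → ℚ),
        (∃ u, ∀ k, b k ≤ a k * t + d k * u + ∑ i, v k i * x i) ↔
        (∀ k', b' k' ≤ a' k' * t + ∑ i, v' k' i * x i) := by
  classical
  refine ⟨κ ⊕ κ × κ, inferInstance,
    Sum.elim (fun k => if d k = 0 then a k else 0)
      (fun p => if 0 < d p.1 ∧ d p.2 < 0 then (-d p.2) * a p.1 + d p.1 * a p.2 else 0),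
    Sum.elim (fun k i => if d k = 0 then v k i else 0)
      (fun p i => if 0 < d p.1 ∧ d p.2 < 0 then (-d p.2) * v p.1 i + d p.1 * v p.2 i else 0),
    Sum.elim (fun k => if d k = 0 then b k else 0)
      (fun p => if 0 < d p.1 ∧ d p.2 < 0 then (-d p.2) * b p.1 + d p.1 * b p.2 else 0),
    fun t x => ?_⟩
  have hsum : ∀ (c1 c2 : ℚ) (w1 w2 : ι → ℚ),
      ∑ i, (c1 * w1 i + c2 * w2 i) * x i
        = c1 * ∑ i, w1 i * x i + c2 * ∑ i, w2 i * x i := by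
    intro c1 c2 w1 w2
    rw [Finset.mul_sum, Finset.mul_sum, ← Finset.sum_add_distrib]
    exact Finset.sum_congr rfl (fun i _ => by ring)
  constructor
  · rintro ⟨u, hu⟩ (k | ⟨k, k'⟩)
    · simp only [Sum.elim_inl]
      by_cases hdk : d k = 0
      · simp only [if_pos hdk]
        have := hu k
        rw [hdk] at this
        linarith
      · simp [if_neg hdk]
    · simp only [Sum.elim_inr]
      by_cases hs : 0 < d k ∧ d k' < 0
      · simp only [if_pos hs]
        rw [hsum]
        have h1 := mul_le_mul_of_nonneg_left (hu k) (by linarith [hs.2] : (0:ℚ) ≤ -d k')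
        have h2 := mul_le_mul_of_nonneg_left (hu k') (le_of_lt hs.1)
        nlinarith
      · simp [if_neg hs]
  · intro h
    have h0 : ∀ k, d k = 0 → b k ≤ (a k * t + ∑ i, v k i * x i) := by
      intro k hdk
      have := h (Sum.inl k)
      simpa only [Sum.elim_inl, if_pos hdk] using this
    have hpair : ∀ k k', 0 < d k → d k' < 0 →
        (-d k') * (b k - (a k * t + ∑ i, v k i * x i))
          ≤ d k * ((a k' * t + ∑ i, v k' i * x i) - b k') := by
      intro k k' hk hk'
      have := h (Sum.inr (k, k'))
      simp only [Sum.elim_inr, if_pos (⟨hk, hk'⟩ : 0 < d k ∧ d k' < 0)] at this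
      rw [hsum] at this
      nlinarith
    obtain ⟨u, hu⟩ := fm_core d b (fun k => a k * t + ∑ i, v k i * x i) h0 hpair
    exact ⟨u, fun k => by have := hu k; linarith⟩


/-- The statement that rational LPs over variable set `ι` (with a distinguished
variable `t` to be minimized) attain their minimum. -/
abbrev LPminI (ι : Type) [Fintype ι] : Prop :=
  ∀ (κ : Type) (_ : Fintype κ) (a : κ → ℚ) (v : κ → ι → ℚ) (b : κ → ℚ),
    (∃ (t : ℚ) (x : ι → ℚ), ∀ k, b k ≤ a k * t + ∑ i, v k i * x i) →
    (∃ Bd, ∀ t (x : ι → ℚ), (∀ k, b k ≤ a k * t + ∑ i, v k i * x i) → Bd ≤ t) →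
    ∃ (t : ℚ) (x : ι → ℚ), (∀ k, b k ≤ a k * t + ∑ i, v k i * x i) ∧
      ∀ t' (x' : ι → ℚ), (∀ k, b k ≤ a k * t' + ∑ i, v k i * x' i) → t ≤ t'

abbrev LPmin (ι : Type) : Prop := ∀ (inst : Fintype ι), @LPminI ι inst

lemma lp_min_empty : LPmin PEmpty := by
  classical
  intro _ κ _ a v b ⟨t0, x0, h0⟩ ⟨Bd, hBd⟩
  have hsum0 : ∀ (w : κ → PEmpty → ℚ) (x : PEmpty → ℚ) k, ∑ i, w k i * x i = 0 := by
    intro w x k; simp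
  simp only [hsum0] at h0 ⊢
  set P : Finset κ := Finset.univ.filter (fun k => 0 < a k) with hP
  have hPne : P.Nonempty := by
    by_contra hne
    have hall : ∀ k, a k ≤ 0 := by
      intro k
      by_contra hpos
      exact hne ⟨k, Finset.mem_filter.mpr ⟨Finset.mem_univ _, lt_of_not_ge hpos⟩⟩
    have hfeas : ∀ k, b k ≤ a k * (min t0 (Bd - 1)) + 0 := by
      intro k
      have h1 : a k * min t0 (Bd - 1) ≥ a k * t0 :=
        mul_le_mul_of_nonpos_left (min_le_left _ _) (hall k)
      have := h0 k
      linarith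
    have := hBd _ x0 (by simpa only [hsum0] using hfeas)
    have := min_le_right t0 (Bd - 1)
    linarith
  have htstar0 : P.sup' hPne (fun k => b k / a k) ≤ t0 := by
    apply Finset.sup'_le
    intro k hk
    have hak : 0 < a k := (Finset.mem_filter.mp hk).2
    rw [div_le_iff₀ hak]
    have := h0 k; linarith
  refine ⟨P.sup' hPne (fun k => b k / a k), fun i => i.elim, fun k => ?_, ?_⟩
  · rcases le_or_gt (a k) 0 with hk | hk
    · have h1 : a k * P.sup' hPne (fun k => b k / a k) ≥ a k * t0 :=
        mul_le_mul_of_nonpos_left htstar0 hk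
      have := h0 k; linarith
    · have hle : b k / a k ≤ P.sup' hPne (fun k' => b k' / a k') :=
        Finset.le_sup' (f := fun k' => b k' / a k')
          (Finset.mem_filter.mpr ⟨Finset.mem_univ _, hk⟩)
      rw [div_le_iff₀ hk] at hle
      linarith
  · intro t' x' h'
    apply Finset.sup'_le
    intro k hk
    have hak : 0 < a k := (Finset.mem_filter.mp hk).2
    rw [div_le_iff₀ hak]
    have := h' k; linarith

lemma lp_min_equiv {α β : Type} (e : α ≃ β) (hα : LPmin α) : LPmin β := by
  intro instβ κ instκ a v b ⟨t0, x0, hfeas⟩ ⟨Bd, hBd⟩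
  have instα : Fintype α := Fintype.ofEquiv β e.symm
  obtain ⟨t, x, hx, hopt⟩ := hα instα κ instκ a (fun k i => v k (e i)) b
    ⟨t0, (fun i => x0 (e i)), fun k => by
      have : ∑ i : α, v k (e i) * ((fun i => x0 (e i))) i = ∑ j : β, v k j * x0 j :=
        Equiv.sum_comp e (fun j => v k j * x0 j)
      rw [this]; exact hfeas k⟩
    ⟨Bd, fun t x h => hBd t ((fun j => x (e.symm j))) (fun k => by
      have : ∑ i : α, v k (e i) * x (e.symm (e i)) = ∑ j : β, v k j * x (e.symm j) :=
        Equiv.sum_comp e (fun j => v k j * x (e.symm j))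
      have h2 := h k
      simp only [Equiv.symm_apply_apply] at this
      show b k ≤ a k * t + ∑ j : β, v k j * x (e.symm j)
      rw [← this]; exact h2)⟩
  refine ⟨t, (fun j => x (e.symm j)), fun k => ?_, fun t' x' h' => ?_⟩
  · have : ∑ i : α, v k (e i) * x (e.symm (e i)) = ∑ j : β, v k j * x (e.symm j) :=
      Equiv.sum_comp e (fun j => v k j * x (e.symm j))
    simp only [Equiv.symm_apply_apply] at this
    have h2 := hx k
    show b k ≤ a k * t + ∑ j : β, v k j * x (e.symm j)
    rw [← this]
    exact h2
  · refine hopt t' (fun i => x' (e i)) (fun k => ?_)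
    have : ∑ i : α, v k (e i) * (fun i => x' (e i)) i = ∑ j : β, v k j * x' j :=
      Equiv.sum_comp e (fun j => v k j * x' j)
    rw [this]; exact h' k

lemma lp_min_option {α : Type} [Fintype α] (hα : LPmin α) : LPmin (Option α) := by
  intro instO κ instκ a v b hne hbd
  have hsplit : ∀ (k : κ) (x : Option α → ℚ),
      ∑ j : Option α, v k j * x j = v k none * x none + ∑ i : α, v k (some i) * x (some i) := by
    intro k x
    rw [Subsingleton.elim instO instFintypeOption]
    exact Fintype.sum_option _
  obtain ⟨κ', instκ', a', v', b', hiff⟩ :=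
    fm_eliminate (ι := α) a (fun k => v k none) (fun k i => v k (some i)) b
  obtain ⟨t0, x0, h0⟩ := hne
  obtain ⟨Bd, hBd⟩ := hbd
  have harg1 : ∃ (t : ℚ) (y : α → ℚ), ∀ k', b' k' ≤ a' k' * t + ∑ i, v' k' i * y i := by
    refine ⟨t0, fun i => x0 (some i), (hiff t0 _).mp ⟨x0 none, fun k => ?_⟩⟩
    have := h0 k; rw [hsplit] at this; linarith
  have harg2 : ∃ Bd, ∀ t (y : α → ℚ), (∀ k', b' k' ≤ a' k' * t + ∑ i, v' k' i * y i) → Bd ≤ t := by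
    refine ⟨Bd, fun t y hty => ?_⟩
    obtain ⟨u, hu⟩ := (hiff t y).mpr hty
    refine hBd t (fun o => Option.elim o u y) (fun k => ?_)
    rw [hsplit]
    have := hu k
    simp only [Option.elim]
    linarith
  have KEY := hα ‹Fintype α› κ' instκ'
  have KEY2 := KEY a' v' b'
  have KEY3 := KEY2 harg1
  have KEY4 := KEY3 harg2
  obtain ⟨t, y, hy, hopt⟩ := KEY4
  obtain ⟨u, hu⟩ := (hiff t y).mpr hy
  refine ⟨t, fun o => Option.elim o u y, fun k => ?_, fun t' x' h' => ?_⟩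
  · rw [hsplit]
    have := hu k
    simp only [Option.elim]
    linarith
  · refine hopt t' (fun i => x' (some i)) ((hiff t' _).mp ⟨x' none, fun k => ?_⟩)
    have := h' k; rw [hsplit] at this; linarith

lemma lp_min (ι : Type) [Finite ι] : LPmin ι :=
  Finite.induction_empty_option (fun e h => lp_min_equiv e h) lp_min_empty
    (fun h => lp_min_option h) ι


/-- There exists `k ≥ 1` such that `α̂(F) = α_F(nk)/(nk)` for all `n ≥ 1`. -/
theorem stmt14 {K : Type*} [Field K] {s m : ℕ} (C : Matrix (Fin s) (Fin m) ℚ)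
    (hC : ∀ i j, 0 ≤ C i j) (hcol : ∀ j, ∃ i, C i j ≠ 0) :
    ∃ k : ℕ, 1 ≤ k ∧ ∀ n : ℕ, 1 ≤ n →
      waldschmidt K C = (alphaF K C (n * k) : ℝ) / (n * k : ℕ) := by
  classical
  -- column sums are positive
  have hcolpos : ∀ j, 0 < ∑ i, C i j := by
    intro j
    obtain ⟨i0, hi0⟩ := hcol j
    exact Finset.sum_pos' (fun i _ => hC i j)
      ⟨i0, Finset.mem_univ _, (hC i0 j).lt_of_ne (Ne.symm hi0)⟩
  -- the linear program: minimize t subject to x ∈ Q(C), t = ∑ x i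
  set a : (Fin m ⊕ (Fin s ⊕ Fin 2)) → ℚ :=
    Sum.elim (fun _ => 0) (Sum.elim (fun _ => 0) (fun p => if p = 0 then 1 else -1)) with ha
  set v : (Fin m ⊕ (Fin s ⊕ Fin 2)) → Fin s → ℚ :=
    Sum.elim (fun j i => C i j)
      (Sum.elim (fun i0 i => if i = i0 then 1 else 0)
        (fun p _ => if p = 0 then -1 else 1)) with hv
  set b : (Fin m ⊕ (Fin s ⊕ Fin 2)) → ℚ :=
    Sum.elim (fun _ => 1) (Sum.elim (fun _ => 0) (fun _ => 0)) with hb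
  have hSat : ∀ (t : ℚ) (x : Fin s → ℚ),
      (∀ k, b k ≤ a k * t + ∑ i, v k i * x i) ↔ (memCP C x ∧ t = ∑ i, x i) := by
    intro t x
    constructor
    · intro h
      have hx0 : ∀ i, 0 ≤ x i := by
        intro i
        have := h (Sum.inr (Sum.inl i))
        simpa [ha, hv, hb, ite_mul, Finset.sum_ite_eq'] using this
      have hxc : ∀ j, 1 ≤ ∑ i, x i * C i j := by
        intro j
        have := h (Sum.inl j)
        simpa [ha, hv, hb, mul_comm] using this
      have h1 := h (Sum.inr (Sum.inr 0))
      have h2 := h (Sum.inr (Sum.inr 1))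
      simp [ha, hv, hb] at h1 h2
      refine ⟨⟨hx0, hxc⟩, le_antisymm ?_ ?_⟩ <;> [skip; skip]
      · nlinarith [h2]
      · nlinarith [h1]
    · rintro ⟨⟨hx0, hxc⟩, rfl⟩
      rintro (j | i | p)
      · simpa [ha, hv, hb, mul_comm] using hxc j
      · simpa [ha, hv, hb, ite_mul, Finset.sum_ite_eq'] using hx0 i
      · fin_cases p <;> simp [ha, hv, hb]
  -- feasibility
  have hfeas : ∃ (t : ℚ) (x : Fin s → ℚ), ∀ k, b k ≤ a k * t + ∑ i, v k i * x i := by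
    set N : ℚ := ∑ j, (∑ i, C i j)⁻¹ with hN
    have hN0 : 0 ≤ N := Finset.sum_nonneg (fun j _ => inv_nonneg.mpr (hcolpos j).le)
    refine ⟨∑ _i : Fin s, N, fun _ => N, (hSat _ _).mpr ⟨⟨fun _ => hN0, fun j => ?_⟩, rfl⟩⟩
    have hNj : (∑ i, C i j)⁻¹ ≤ N :=
      Finset.single_le_sum (f := fun j => (∑ i, C i j)⁻¹)
        (fun j _ => inv_nonneg.mpr (hcolpos j).le) (Finset.mem_univ j)
    have h2 : (∑ i, C i j)⁻¹ * (∑ i, C i j) ≤ N * (∑ i, C i j) :=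
      mul_le_mul_of_nonneg_right hNj (hcolpos j).le
    rw [inv_mul_cancel₀ (hcolpos j).ne'] at h2
    calc (1:ℚ) ≤ N * (∑ i, C i j) := h2
    _ = ∑ i, N * C i j := by rw [Finset.mul_sum]
  have hbdd : ∃ Bd, ∀ t (x : Fin s → ℚ),
      (∀ k, b k ≤ a k * t + ∑ i, v k i * x i) → Bd ≤ t := by
    refine ⟨0, fun t x h => ?_⟩
    obtain ⟨⟨hx0, _⟩, rfl⟩ := (hSat t x).mp h
    exact Finset.sum_nonneg (fun i _ => hx0 i)
  have KEY := lp_min (Fin s) inferInstance _ inferInstance a v b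
  have KEY2 := KEY hfeas
  have KEY3 := KEY2 hbdd
  obtain ⟨tstar, xstar, hsat, hopt⟩ := KEY3
  obtain ⟨hxstar, htstar⟩ := (hSat tstar xstar).mp hsat
  have hopt2 : ∀ y, memCP C y → tstar ≤ ∑ i, y i := fun y hy =>
    hopt (∑ i, y i) y ((hSat _ _).mpr ⟨hy, rfl⟩)
  have htstar0 : 0 ≤ tstar := htstar ▸ Finset.sum_nonneg (fun i _ => hxstar.1 i)
  -- common denominator
  set k : ℕ := ∏ i, (xstar i).den with hkdef
  have hkpos : 0 < k := Finset.prod_pos (fun i _ => (xstar i).pos)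
  have hk1 : 1 ≤ k := hkpos
  have hkQ : (k : ℚ) ≠ 0 := by positivity
  -- integer numerators
  have hAex : ∀ i, ∃ A : ℕ, (A : ℚ) = k * xstar i := by
    intro i
    have hdvd : (xstar i).den ∣ k := Finset.dvd_prod_of_mem _ (Finset.mem_univ i)
    obtain ⟨c, hc⟩ := hdvd
    have hden : ((xstar i).den : ℚ) * xstar i = (xstar i).num := by
      rw [mul_comm, Rat.mul_den_eq_num]
    refine ⟨c * (xstar i).num.toNat, ?_⟩
    have hnum : (0:ℤ) ≤ (xstar i).num := Rat.num_nonneg.mpr (hxstar.1 i)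
    push_cast [Int.toNat_of_nonneg hnum]
    rw [hc]
    push_cast
    rw [mul_comm ((xstar i).den : ℚ) (c:ℚ), mul_assoc, hden]
    congr 1
    exact_mod_cast Int.toNat_of_nonneg hnum
  choose A hA using hAex
  have hAx : ∀ i, (A i : ℚ) / k = xstar i := by
    intro i; rw [hA i]; field_simp
  set Asum : ℕ := ∑ i, A i with hAsumdef
  have hAsum : (Asum : ℚ) = k * tstar := by
    rw [hAsumdef]
    push_cast
    rw [show (∑ i, (A i : ℚ)) = ∑ i, (k:ℚ) * xstar i from Finset.sum_congr rfl (fun i _ => hA i)]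
    rw [← Finset.mul_sum, htstar]
  -- set description of the filtration ideal
  have hset : ∀ n : ℕ, { f : MvPolynomial (Fin s) K | ∃ a : Fin s →₀ ℕ,
      f = monomial a 1 ∧ memCP C (fun i => (a i : ℚ) / n) }
      = (fun a : Fin s →₀ ℕ => monomial a (1:K)) ''
        {a : Fin s →₀ ℕ | memCP C (fun i => (a i : ℚ) / n)} := by
    intro n
    ext f
    constructor
    · rintro ⟨a, rfl, h⟩; exact ⟨a, h, rfl⟩
    · rintro ⟨a, h, rfl⟩; exact ⟨a, rfl, h⟩
  -- lower bound for every element of the alphaF defining set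
  have hlow : ∀ N : ℕ, N ≠ 0 → ∀ d ∈ { d | ∃ a : Fin s →₀ ℕ,
      (monomial a 1 : MvPolynomial (Fin s) K) ∈ filtIdeal K C N ∧ d = ∑ i, a i },
      (N : ℚ) * tstar ≤ (d : ℚ) := by
    rintro N hN d ⟨a, hmem, rfl⟩
    rw [filtIdeal, if_neg hN, hset, MvPolynomial.mem_ideal_span_monomial_image] at hmem
    have hsup : a ∈ (monomial a (1:K)).support := by
      rw [MvPolynomial.support_monomial, if_neg one_ne_zero]
      exact Finset.mem_singleton_self a
    obtain ⟨bb, hbb, hba⟩ := hmem a hsup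
    have h2 := hopt2 _ hbb
    have h3 : tstar ≤ (∑ i, (bb i : ℚ)) / N := by
      rw [Finset.sum_div]
      exact h2
    have hNpos : (0:ℚ) < N := by positivity
    rw [le_div_iff₀ hNpos] at h3
    have h4 : (∑ i, (bb i : ℚ)) ≤ ∑ i, (a i : ℚ) :=
      Finset.sum_le_sum (fun i _ => by exact_mod_cast hba i)
    push_cast
    nlinarith
  -- membership producer
  have hmemD : ∀ N : ℕ, N ≠ 0 → ∀ g : Fin s → ℕ,
      memCP C (fun i => (g i : ℚ) / N) → (∑ i, g i) ∈ { d | ∃ a : Fin s →₀ ℕ,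
      (monomial a 1 : MvPolynomial (Fin s) K) ∈ filtIdeal K C N ∧ d = ∑ i, a i } := by
    intro N hN g hg
    refine ⟨Finsupp.equivFunOnFinite.symm g, ?_, ?_⟩
    · rw [filtIdeal, if_neg hN]
      exact Ideal.subset_span ⟨Finsupp.equivFunOnFinite.symm g, rfl, by
        simpa using hg⟩
    · simp
  -- the integer point A is feasible at denominator k (and its multiples)
  have hAfeas : memCP C (fun i => (A i : ℚ)) := by
    constructor
    · intro i; positivity
    · intro j
      have h1 := hxstar.2 j
      have h2 : ∑ i, xstar i * C i j ≤ ∑ i, (A i : ℚ) * C i j := by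
        apply Finset.sum_le_sum
        intro i _
        apply mul_le_mul_of_nonneg_right _ (hC i j)
        rw [hA i]
        nlinarith [hxstar.1 i, (by exact_mod_cast hk1 : (1:ℚ) ≤ (k:ℚ))]
      linarith
  -- nonemptiness of the alphaF defining set
  have hne : ∀ N : ℕ, N ≠ 0 → { d | ∃ a : Fin s →₀ ℕ,
      (monomial a 1 : MvPolynomial (Fin s) K) ∈ filtIdeal K C N ∧ d = ∑ i, a i }.Nonempty := by
    intro N hN
    refine ⟨∑ i, N * A i, hmemD N hN (fun i => N * A i) ?_⟩
    have : ∀ i, ((N * A i : ℕ) : ℚ) / N = (A i : ℚ) := by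
      intro i
      push_cast
      rw [mul_comm, mul_div_assoc, div_self (by exact_mod_cast hN), mul_one]
    constructor
    · intro i
      show (0:ℚ) ≤ ((N * A i : ℕ) : ℚ) / N
      rw [this i]; positivity
    · intro j
      show (1:ℚ) ≤ ∑ i, ((N * A i : ℕ) : ℚ) / N * C i j
      simp_rw [this]; exact hAfeas.2 j
  -- lower bound for alphaF
  have hlowA : ∀ N : ℕ, N ≠ 0 → (N : ℚ) * tstar ≤ (alphaF K C N : ℚ) :=
    fun N hN => hlow N hN _ (Nat.sInf_mem (hne N hN))
  -- exact value at multiples of k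
  have halpha : ∀ n : ℕ, n ≠ 0 → alphaF K C (n * k) = n * Asum := by
    intro n hn
    have hnk : n * k ≠ 0 := by positivity
    apply le_antisymm
    · have hmem : (∑ i, n * A i) ∈ _ := hmemD (n * k) hnk (fun i => n * A i) ?_
      · have : (∑ i, n * A i) = n * Asum := by rw [hAsumdef, Finset.mul_sum]
        rw [← this]
        exact Nat.sInf_le hmem
      · have heq : ∀ i, ((n * A i : ℕ) : ℚ) / ((n * k : ℕ) : ℚ) = xstar i := by
          intro i
          push_cast
          rw [mul_div_mul_left _ _ (by exact_mod_cast hn : (n:ℚ) ≠ 0)]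
          exact hAx i
        constructor
        · intro i
          show (0:ℚ) ≤ ((n * A i : ℕ) : ℚ) / ((n * k : ℕ) : ℚ)
          rw [heq i]; exact hxstar.1 i
        · intro j
          show (1:ℚ) ≤ ∑ i, ((n * A i : ℕ) : ℚ) / ((n * k : ℕ) : ℚ) * C i j
          simp_rw [heq]
          exact hxstar.2 j
    · apply le_csInf (hne _ hnk)
      intro d hd
      have h1 := hlow (n * k) hnk d hd
      have h2 : ((n * Asum : ℕ) : ℚ) ≤ (d : ℚ) := by
        push_cast
        rw [hAsum] at *
        push_cast at h1
        nlinarith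
      exact_mod_cast h2
  -- the Waldschmidt constant equals tstar
  have hterm : ∀ n : ℕ+, ((tstar : ℚ) : ℝ) ≤ (alphaF K C (n : ℕ) : ℝ) / ((n : ℕ) : ℝ) := by
    intro n
    have h1 := hlowA n n.ne_zero
    have h2 : ((n : ℕ) : ℝ) * ((tstar : ℚ) : ℝ) ≤ (alphaF K C (n : ℕ) : ℝ) := by
      exact_mod_cast h1
    rw [le_div_iff₀ (by positivity : (0:ℝ) < ((n:ℕ):ℝ))]
    linarith
  have hval : (alphaF K C k : ℝ) / ((k : ℕ) : ℝ) = ((tstar : ℚ) : ℝ) := by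
    have h1 : alphaF K C k = Asum := by
      have := halpha 1 one_ne_zero
      simpa using this
    rw [h1]
    have h2 : ((Asum : ℕ) : ℝ) = (k : ℝ) * ((tstar : ℚ) : ℝ) := by exact_mod_cast hAsum
    rw [h2]
    field_simp
  have hwald : waldschmidt K C = ((tstar : ℚ) : ℝ) := by
    apply le_antisymm
    · have := ciInf_le (f := fun n : ℕ+ => (alphaF K C (n : ℕ) : ℝ) / ((n : ℕ) : ℝ))
        ⟨((tstar : ℚ) : ℝ), by rintro x ⟨n, rfl⟩; exact hterm n⟩ (⟨k, hkpos⟩ : ℕ+)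
      rw [waldschmidt]
      calc _ ≤ _ := this
      _ = _ := hval
    · exact le_ciInf hterm
  refine ⟨k, hk1, fun n hn => ?_⟩
  rw [hwald, halpha n (by omega)]
  have h2 : ((n * Asum : ℕ) : ℝ) = ((n * k : ℕ) : ℝ) * ((tstar : ℚ) : ℝ) := by
    push_cast
    have : ((Asum : ℕ) : ℝ) = (k : ℝ) * ((tstar : ℚ) : ℝ) := by exact_mod_cast hAsum
    rw [this]; ring
  rw [h2]
  field_simp
end
end

section
/- Let G be a non-bipartite graph with vertex set {t_1,...,t_s}, let I(G) be its edge ideal and I_c(G) its ideal of covers in S = K[t_1,...,t_s]. Then I_c(G) ⊆ I(G), i.e., for every minimal vertex cover D of G, the squarefree monomial ∏_{t_i ∈ D} t_i lies in I(G). -/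
open MvPolynomial

noncomputable section

/-- For a non-bipartite graph `G`, the ideal of covers is contained in the edge ideal:
for every minimal vertex cover `D` of `G`, the squarefree monomial `∏_{i ∈ D} t_i`
lies in `I(G)`. -/
theorem stmt17 {K : Type*} [Field K] {s : ℕ} (G : SimpleGraph (Fin s))
    (hG : ¬ G.Colorable 2)
    (D : Finset (Fin s))
    (hcov : ∀ i j, G.Adj i j → i ∈ D ∨ j ∈ D)
    (hmin : ∀ D' ⊆ D, (∀ i j, G.Adj i j → i ∈ D' ∨ j ∈ D') → D' = D) :
    (∏ i ∈ D, (X i : MvPolynomial (Fin s) K)) ∈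
      Ideal.span {f : MvPolynomial (Fin s) K | ∃ i j, G.Adj i j ∧ f = X i * X j} := by
  by_cases h : ∃ a b, G.Adj a b ∧ a ∈ D ∧ b ∈ D
  · obtain ⟨a, b, hab, ha, hb⟩ := h
    have hne : a ≠ b := hab.ne
    have hsub : ({a, b} : Finset (Fin s)) ⊆ D := by
      intro x hx
      rcases Finset.mem_insert.mp hx with rfl | hx
      · exact ha
      · rw [Finset.mem_singleton.mp hx]; exact hb
    have key : (∏ i ∈ D, (X i : MvPolynomial (Fin s) K))
        = (∏ i ∈ D \ {a, b}, (X i : MvPolynomial (Fin s) K)) * (X a * X b) := by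
      rw [← Finset.prod_sdiff hsub, Finset.prod_pair hne]
    rw [key]
    exact Ideal.mul_mem_left _ _ (Ideal.subset_span ⟨a, b, hab, rfl⟩)
  · exfalso
    apply hG
    push_neg at h
    exact ⟨SimpleGraph.Coloring.mk (fun i => if i ∈ D then 0 else 1) (by
      intro x y hxy
      rcases hcov x y hxy with hx | hy
      · have hy' : y ∉ D := fun hy => h x y hxy hx hy
        simp [hx, hy']
      · have hx' : x ∉ D := fun hx => h x y hxy hx hy
        simp [hx', hy])⟩
end
end

section
/- Let q = (t_1^{b_1},...,t_r^{b_r}) be an irreducible monomial ideal of S = K[t_1,...,t_s] with b_i ≥ 1 for all i. Then the following are equivalent: (a) q is normal (all powers q^n equal their integral closure); (b) q is complete (q equals its integral closure); (c) there is an index j such that b_i = 1 for all i ≠ j. -/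
open MvPolynomial

noncomputable section

/-- The integral closure of a monomial ideal `J`: the ideal generated by all monomials
`t^a` with `(t^a)^p ∈ J^p` for some `p ≥ 1`. -/
def intCl {σ : Type*} {K : Type*} [Field K] (J : Ideal (MvPolynomial σ K)) :
    Ideal (MvPolynomial σ K) :=
  Ideal.span { f | ∃ (a : σ →₀ ℕ) (p : ℕ), 1 ≤ p ∧ f = monomial a 1 ∧
    (monomial a 1 : MvPolynomial σ K) ^ p ∈ J ^ p }

/-- The irreducible monomial ideal `q = (t_1^{b_1}, ..., t_r^{b_r})` of `K[t_1,...,t_s]`. -/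
def irrId (K : Type*) [Field K] {s r : ℕ} (h : r ≤ s) (b : Fin r → ℕ) :
    Ideal (MvPolynomial (Fin s) K) :=
  Ideal.span (Set.range fun i : Fin r => (X (Fin.castLE h i) : MvPolynomial (Fin s) K) ^ b i)

namespace Stmt18Aux

variable {K : Type*} [Field K] {s r : ℕ}

/-- The exponent vector of the generator of `q^n` corresponding to `c`. -/
def EE (h : r ≤ s) (b c : Fin r → ℕ) : Fin s →₀ ℕ :=
  ∑ i, Finsupp.single (Fin.castLE h i) (b i * c i)

lemma EE_apply (h : r ≤ s) (b c : Fin r → ℕ) (j : Fin r) :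
    EE h b c (Fin.castLE h j) = b j * c j := by
  rw [EE, Finsupp.finset_sum_apply]
  simp [Finsupp.single_apply, (Fin.castLE_injective h).eq_iff]

lemma EE_apply_notin (h : r ≤ s) (b c : Fin r → ℕ) {x : Fin s}
    (hx : ¬ ∃ i, Fin.castLE h i = x) : EE h b c x = 0 := by
  rw [EE, Finsupp.finset_sum_apply]
  refine Finset.sum_eq_zero fun i _ => ?_
  rw [Finsupp.single_apply, if_neg (fun e => hx ⟨i, e⟩)]

lemma EE_le_iff (h : r ≤ s) (b c : Fin r → ℕ) (a : Fin s →₀ ℕ) :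
    EE h b c ≤ a ↔ ∀ i, b i * c i ≤ a (Fin.castLE h i) := by
  rw [Finsupp.le_def]
  constructor
  · intro H i
    simpa [EE_apply] using H (Fin.castLE h i)
  · intro H x
    by_cases hx : ∃ i, Fin.castLE h i = x
    · obtain ⟨i, rfl⟩ := hx
      rw [EE_apply]; exact H i
    · rw [EE_apply_notin h b c hx]; exact Nat.zero_le _

lemma EE_add (h : r ≤ s) (b c c' : Fin r → ℕ) :
    EE h b (c + c') = EE h b c + EE h b c' := by
  rw [EE, EE, EE, ← Finset.sum_add_distrib]
  refine Finset.sum_congr rfl fun i _ => ?_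
  rw [Pi.add_apply, Nat.mul_add, Finsupp.single_add]

lemma EE_single (h : r ≤ s) (b : Fin r → ℕ) (k : Fin r) :
    EE h b (Pi.single k 1) = Finsupp.single (Fin.castLE h k) (b k) := by
  rw [EE, Finset.sum_eq_single k]
  · simp
  · intro i _ hik
    rw [Pi.single_eq_of_ne hik, Nat.mul_zero, Finsupp.single_zero]
  · intro habs; exact absurd (Finset.mem_univ k) habs

/-- Greedy: any `n ≤ ∑ f` is achieved by some `d ≤ f`. -/
lemma exists_sum_eq {r : ℕ} (f : Fin r → ℕ) :
    ∀ n, n ≤ ∑ i, f i → ∃ d : Fin r → ℕ, (∀ i, d i ≤ f i) ∧ ∑ i, d i = n := by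
  intro n
  induction n with
  | zero => exact fun _ => ⟨0, fun i => Nat.zero_le _, by simp⟩
  | succ n ih =>
    intro hn
    obtain ⟨d, hd, hsum⟩ := ih (Nat.le_of_succ_le hn)
    have hex : ∃ k, d k < f k := by
      by_contra hno
      push_neg at hno
      have := Finset.sum_le_sum (fun i (_ : i ∈ Finset.univ) => hno i)
      omega
    obtain ⟨k, hk⟩ := hex
    refine ⟨Function.update d k (d k + 1), fun i => ?_, ?_⟩
    · rcases eq_or_ne i k with rfl | hik
      · rw [Function.update_self]; omega
      · rw [Function.update_of_ne hik]; exact hd i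
    · rw [Finset.sum_update_of_mem (Finset.mem_univ k),
        Finset.sdiff_singleton_eq_erase]
      have h2 := Finset.add_sum_erase Finset.univ d (Finset.mem_univ k)
      omega

/-- Decompose a positive-sum function. -/
lemma exists_split {r : ℕ} (c : Fin r → ℕ) {n : ℕ} (hc : ∑ i, c i = n + 1) :
    ∃ (c' : Fin r → ℕ) (k : Fin r), (∑ i, c' i = n) ∧ c = c' + Pi.single k 1 := by
  have hex : ∃ k ∈ Finset.univ, c k ≠ 0 := by
    apply Finset.exists_ne_zero_of_sum_ne_zero
    omega
  obtain ⟨k, -, hk⟩ := hex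
  refine ⟨Function.update c k (c k - 1), k, ?_, ?_⟩
  · rw [Finset.sum_update_of_mem (Finset.mem_univ k),
      Finset.sdiff_singleton_eq_erase]
    have h2 := Finset.add_sum_erase Finset.univ c (Finset.mem_univ k)
    omega
  · funext i
    rcases eq_or_ne i k with rfl | hik
    · simp only [Pi.add_apply, Function.update_self, Pi.single_eq_same]
      omega
    · simp only [Pi.add_apply, Function.update_of_ne hik, Pi.single_eq_of_ne hik, Nat.add_zero]

/-- `q^n` is the monomial ideal generated by the `EE h b c` with `∑ c = n`. -/
lemma irr_pow_eq (h : r ≤ s) (b : Fin r → ℕ) (n : ℕ) :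
    (irrId K h b) ^ n = Ideal.span ((fun a => monomial a (1 : K)) ''
      {a | ∃ c : Fin r → ℕ, (∑ i, c i) = n ∧ a = EE h b c}) := by
  induction n with
  | zero =>
    rw [pow_zero]
    symm
    rw [Ideal.one_eq_top, Ideal.eq_top_iff_one]
    apply Ideal.subset_span
    refine ⟨0, ⟨0, by simp, ?_⟩, by simp⟩
    simp [EE]
  | succ n ih =>
    have hq : irrId K h b = Ideal.span ((fun a => monomial a (1 : K)) ''
        {a | ∃ i : Fin r, a = Finsupp.single (Fin.castLE h i) (b i)}) := by
      rw [irrId]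
      congr 1
      ext f
      constructor
      · rintro ⟨i, rfl⟩
        exact ⟨Finsupp.single (Fin.castLE h i) (b i), ⟨i, rfl⟩, (X_pow_eq_monomial).symm⟩
      · rintro ⟨a, ⟨i, rfl⟩, rfl⟩
        exact ⟨i, X_pow_eq_monomial⟩
    rw [pow_succ, ih, hq, Ideal.span_mul_span']
    congr 1
    ext f
    rw [Set.mem_mul]
    constructor
    · rintro ⟨x, ⟨ax, ⟨c, hc, rfl⟩, rfl⟩, y, ⟨ay, ⟨i, rfl⟩, rfl⟩, rfl⟩
      refine ⟨EE h b (c + Pi.single i 1), ⟨c + Pi.single i 1, ?_, rfl⟩, ?_⟩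
      · simp only [Pi.add_apply]
        rw [Finset.sum_add_distrib, hc, Finset.sum_pi_single']
        simp
      · rw [EE_add, EE_single]
        simp [monomial_mul]
    · rintro ⟨a, ⟨c, hc, rfl⟩, rfl⟩
      obtain ⟨c', k, hc', rfl⟩ := exists_split c hc
      refine ⟨monomial (EE h b c') 1, ⟨EE h b c', ⟨c', hc', rfl⟩, rfl⟩,
        monomial (Finsupp.single (Fin.castLE h k) (b k)) 1,
        ⟨Finsupp.single (Fin.castLE h k) (b k), ⟨k, rfl⟩, rfl⟩, ?_⟩
      rw [EE_add, EE_single]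
      simp [monomial_mul]

/-- Membership of a monomial in `q^n`. -/
lemma mem_irr_pow (h : r ≤ s) (b : Fin r → ℕ) (a : Fin s →₀ ℕ) (n : ℕ) :
    (monomial a (1 : K)) ∈ (irrId K h b) ^ n ↔
      ∃ c : Fin r → ℕ, (∑ i, c i) = n ∧ ∀ i, b i * c i ≤ a (Fin.castLE h i) := by
  classical
  rw [irr_pow_eq, mem_ideal_span_monomial_image]
  rw [support_monomial, if_neg (one_ne_zero)]
  constructor
  · intro H
    obtain ⟨si, ⟨c, hc, rfl⟩, hle⟩ := H a (Finset.mem_singleton_self a)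
    exact ⟨c, hc, (EE_le_iff h b c a).1 hle⟩
  · rintro ⟨c, hc, hle⟩ xi hxi
    rw [Finset.mem_singleton] at hxi
    exact ⟨EE h b c, ⟨c, hc, rfl⟩, hxi ▸ (EE_le_iff h b c a).2 hle⟩

/-- The span generators of `q^n` lie in `intCl (q^n)`. -/
lemma pow_le_intCl (h : r ≤ s) (b : Fin r → ℕ) (n : ℕ) :
    (irrId K h b) ^ n ≤ intCl ((irrId K h b) ^ n) := by
  nth_rewrite 1 [irr_pow_eq]
  rw [Ideal.span_le]
  rintro f ⟨a, ⟨c, hc, rfl⟩, rfl⟩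
  apply Ideal.subset_span
  refine ⟨EE h b c, 1, le_rfl, rfl, ?_⟩
  rw [pow_one, pow_one, mem_irr_pow]
  exact ⟨c, hc, fun i => le_of_eq (EE_apply h b c i).symm⟩

/-- If all `b i` except possibly `j` equal `1`, then `q` is normal. -/
lemma normal_of (h : r ≤ s) (b : Fin r → ℕ) (hb : ∀ i, 1 ≤ b i)
    (j : Fin r) (hj : ∀ i, i ≠ j → b i = 1) (n : ℕ) :
    intCl ((irrId K h b) ^ n) = (irrId K h b) ^ n := by
  refine le_antisymm ?_ (pow_le_intCl h b n)
  rw [intCl, Ideal.span_le]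
  rintro f ⟨a, p, hp, rfl, hmem⟩
  rw [← pow_mul, monomial_pow, one_pow, mem_irr_pow] at hmem
  obtain ⟨c, hc, hle⟩ := hmem
  simp only [Finsupp.smul_apply, smul_eq_mul] at hle
  rw [SetLike.mem_coe, mem_irr_pow]
  set x := a (Fin.castLE h j) with hx
  set q0 := x / b j with hq0
  set f := Function.update (fun i => a (Fin.castLE h i)) j q0 with hf
  have hbj : 0 < b j := hb j
  have hp0 : 0 < p := hp
  -- bound on c j
  have hcj : c j < p * (q0 + 1) := by
    have h1 : x < b j * (q0 + 1) := by
      have hd := Nat.div_add_mod x (b j)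
      have hm := Nat.mod_lt x hbj
      calc x = b j * q0 + x % b j := hd.symm
        _ < b j * q0 + b j := Nat.add_lt_add_left hm _
        _ = b j * (q0 + 1) := by ring
    have h2 : b j * c j < b j * (p * (q0 + 1)) := by
      calc b j * c j ≤ p * x := hle j
        _ < p * (b j * (q0 + 1)) := (Nat.mul_lt_mul_left hp0).2 h1
        _ = b j * (p * (q0 + 1)) := by ring
    exact Nat.lt_of_mul_lt_mul_left h2
  -- sum of f
  have hsumf : ∑ i, f i = q0 + ∑ i ∈ Finset.univ.erase j, a (Fin.castLE h i) := by
    rw [hf, ← Finset.add_sum_erase Finset.univ _ (Finset.mem_univ j)]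
    rw [Function.update_self]
    congr 1
    refine Finset.sum_congr rfl fun i hi => ?_
    rw [Function.update_of_ne (Finset.ne_of_mem_erase hi)]
  -- n ≤ ∑ f
  have hn : n ≤ ∑ i, f i := by
    set A := ∑ i ∈ Finset.univ.erase j, a (Fin.castLE h i) with hA
    have hrest : ∑ i ∈ Finset.univ.erase j, c i ≤ p * A := by
      rw [hA, Finset.mul_sum]
      refine Finset.sum_le_sum fun i hi => ?_
      have := hle i
      rw [hj i (Finset.ne_of_mem_erase hi), one_mul] at this
      exact this
    have htot : n * p = c j + ∑ i ∈ Finset.univ.erase j, c i := by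
      rw [Finset.add_sum_erase Finset.univ _ (Finset.mem_univ j), hc]
    have key : n * p < p * (q0 + 1 + A) := by
      calc n * p = c j + ∑ i ∈ Finset.univ.erase j, c i := htot
        _ < p * (q0 + 1) + p * A := Nat.add_lt_add_of_lt_of_le hcj hrest
        _ = p * (q0 + 1 + A) := by ring
    have : n < q0 + 1 + A := by
      by_contra hcon
      push_neg at hcon
      exact absurd key (not_lt.2 (by calc p * (q0 + 1 + A) ≤ p * n := Nat.mul_le_mul_left p hcon
        _ = n * p := Nat.mul_comm p n))
    rw [hsumf]
    omega
  obtain ⟨d, hd, hdsum⟩ := exists_sum_eq f n hn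
  refine ⟨d, hdsum, fun i => ?_⟩
  rcases eq_or_ne i j with rfl | hij
  · calc b i * d i ≤ b i * q0 := Nat.mul_le_mul_left _ (by
        have := hd i; rwa [hf, Function.update_self] at this)
      _ = q0 * b i := Nat.mul_comm _ _
      _ ≤ x := Nat.div_mul_le_self x (b i)
  · rw [hj i hij, one_mul]
    have := hd i
    rwa [hf, Function.update_of_ne hij] at this

lemma aux1 (B1 B2 : ℕ) (h1 : 2 ≤ B1) (h2 : 2 ≤ B2) : B2 * B2 ≤ B1 * B2 * (B2 - 1) := by
  obtain ⟨m1, rfl⟩ : ∃ m, B1 = m + 2 := ⟨B1 - 2, by omega⟩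
  obtain ⟨m2, rfl⟩ : ∃ m, B2 = m + 2 := ⟨B2 - 2, by omega⟩
  have : m2 + 2 - 1 = m2 + 1 := by omega
  rw [this]
  calc (m2+2)*(m2+2) ≤ (m2+2)*((m1+2)*(m2+1)) :=
        Nat.mul_le_mul_left _ (le_trans (by omega) (Nat.mul_le_mul_right (m2+1) (by omega : 2 ≤ m1+2)))
    _ = (m1+2)*(m2+2)*(m2+1) := by ring

lemma aux2 (B1 B2 : ℕ) (h1 : 1 ≤ B1) : B2 * (B1 - 1) + B2 = B1 * B2 := by
  obtain ⟨m1, rfl⟩ : ∃ m, B1 = m + 1 := ⟨B1 - 1, by omega⟩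
  have : m1 + 1 - 1 = m1 := by omega
  rw [this]
  ring

/-- If there is no index `j` outside of which all `b i = 1`, then `q` is not complete. -/
lemma not_complete (h : r ≤ s) (hr : 1 ≤ r) (b : Fin r → ℕ) (hb : ∀ i, 1 ≤ b i)
    (hnc : ¬ ∃ j : Fin r, ∀ i : Fin r, i ≠ j → b i = 1) :
    intCl (irrId K h b) ≠ irrId K h b := by
  push_neg at hnc
  obtain ⟨i1, hi1ne, hi1⟩ := hnc ⟨0, hr⟩
  obtain ⟨i2, hne, hi2⟩ := hnc i1
  have hb1 : 2 ≤ b i1 := by have := hb i1; omega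
  have hb2 : 2 ≤ b i2 := by have := hb i2; omega
  set a : Fin s →₀ ℕ := Finsupp.single (Fin.castLE h i1) (b i1 - 1) +
    Finsupp.single (Fin.castLE h i2) (b i2 - 1) with ha
  have hinj := Fin.castLE_injective h
  have ha1 : a (Fin.castLE h i1) = b i1 - 1 := by
    rw [ha, Finsupp.add_apply]
    simp [Finsupp.single_apply, hinj.eq_iff, hne]
  have ha2 : a (Fin.castLE h i2) = b i2 - 1 := by
    rw [ha, Finsupp.add_apply]
    simp [Finsupp.single_apply, hinj.eq_iff, hne.symm]
  have haval : ∀ k, a (Fin.castLE h k) < b k := by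
    intro k
    rcases eq_or_ne k i1 with rfl | h1
    · rw [ha1]; omega
    rcases eq_or_ne k i2 with rfl | h2
    · rw [ha2]; omega
    · have : a (Fin.castLE h k) = 0 := by
        rw [ha, Finsupp.add_apply]
        simp [Finsupp.single_apply, hinj.eq_iff, h1.symm, h2.symm]
      rw [this]; exact hb k
  -- the monomial is not in q
  have hnotmem : (monomial a (1 : K)) ∉ irrId K h b := by
    intro hmem
    rw [← pow_one (irrId K h b), mem_irr_pow] at hmem
    obtain ⟨c, hc, hle⟩ := hmem
    obtain ⟨k, -, hk⟩ : ∃ k ∈ Finset.univ, c k ≠ 0 :=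
      Finset.exists_ne_zero_of_sum_ne_zero (by omega)
    have h1 : b k ≤ b k * c k := Nat.le_mul_of_pos_right _ (by omega)
    have := (h1.trans (hle k)).trans_lt (haval k)
    omega
  -- the monomial is in intCl q
  have hmem : (monomial a (1 : K)) ∈ intCl (irrId K h b) := by
    apply Ideal.subset_span
    refine ⟨a, b i1 * b i2, by exact Nat.mul_pos (by omega) (by omega), rfl, ?_⟩
    rw [monomial_pow, one_pow, mem_irr_pow]
    refine ⟨(fun k => (Pi.single i1 (b i2 * (b i1 - 1)) : Fin r → ℕ) k +
      (Pi.single i2 (b i2) : Fin r → ℕ) k), ?_, ?_⟩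
    · rw [Finset.sum_add_distrib, Finset.sum_pi_single', Finset.sum_pi_single']
      simp only [Finset.mem_univ, if_true]
      exact aux2 (b i1) (b i2) (hb i1)
    · intro k
      simp only [Finsupp.smul_apply, smul_eq_mul]
      rcases eq_or_ne k i1 with rfl | h1
      · rw [Pi.single_eq_same, Pi.single_eq_of_ne hne.symm, Nat.add_zero, ha1]
        exact le_of_eq (by ring)
      rcases eq_or_ne k i2 with rfl | h2
      · rw [Pi.single_eq_of_ne hne, Pi.single_eq_same, Nat.zero_add, ha2]
        exact aux1 _ _ hb1 hb2
      · rw [Pi.single_eq_of_ne h1, Pi.single_eq_of_ne h2]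
        exact Nat.zero_le _
  intro heq
  rw [heq] at hmem
  exact hnotmem hmem

end Stmt18Aux

open Stmt18Aux in
/-- For an irreducible monomial ideal `q = (t_1^{b_1},...,t_r^{b_r})` with `b_i ≥ 1` the
following are equivalent: (a) `q` is normal; (b) `q` is complete; (c) `b_i = 1` for all
`i` except possibly one index `j`. -/
theorem stmt18 {K : Type*} [Field K] {s r : ℕ} (h : r ≤ s) (hr : 1 ≤ r)
    (b : Fin r → ℕ) (hb : ∀ i, 1 ≤ b i) :
    ((∀ n : ℕ, 1 ≤ n → intCl ((irrId K h b) ^ n) = (irrId K h b) ^ n) ↔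
        intCl (irrId K h b) = irrId K h b) ∧
      (intCl (irrId K h b) = irrId K h b ↔
        ∃ j : Fin r, ∀ i : Fin r, i ≠ j → b i = 1) := by
  have hsecond : intCl (irrId K h b) = irrId K h b ↔
      ∃ j : Fin r, ∀ i : Fin r, i ≠ j → b i = 1 := by
    constructor
    · intro hc
      by_contra hnc
      exact not_complete h hr b hb hnc hc
    · rintro ⟨j, hj⟩
      have := normal_of (K := K) h b hb j hj 1
      rwa [pow_one] at this
  refine ⟨⟨fun H => by have := H 1 le_rfl; rwa [pow_one] at this, ?_⟩, hsecond⟩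
  intro hc n _
  obtain ⟨j, hj⟩ := hsecond.mp hc
  exact normal_of (K := K) h b hb j hj n
end
end

section
/- Let q = (t_1^{b_1},...,t_r^{b_r}) be an irreducible monomial ideal of S with b_i ≥ 1, and let a ∈ ℕ^s, n ≥ 1. Then t^a belongs to the integral closure of q^n if and only if Σ_{i=1}^r a_i/b_i ≥ n. Moreover, the Newton polyhedron NP(q) equals {x ∈ ℝ^s : x ≥ 0, Σ_{i=1}^r x_i/b_i ≥ 1} and its vertex set is {b_1 e_1, ..., b_r e_r}. -/
open MvPolynomial

noncomputable section

/-- The Newton polyhedron `NP(q) = ℝ_+^s + conv(b_1 e_1, ..., b_r e_r)` of `q`. -/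
def NPq {s r : ℕ} (h : r ≤ s) (b : Fin r → ℕ) : Set (Fin s → ℝ) :=
  {x | ∃ p ∈ convexHull ℝ (Set.range fun i : Fin r =>
      fun j : Fin s => if j = Fin.castLE h i then ((b i : ℝ)) else 0),
    ∃ z : Fin s → ℝ, (∀ i, 0 ≤ z i) ∧ x = z + p}

/-!
Weight a monomial `t^a` by `Σ a_i / b_i`. Monomials of weight `≥ c` span an ideal `J_c` with
`J_c J_d ⊆ J_(c+d)` and `q ⊆ J_1`, so `(t^a)^p ∈ q^(np)` forces `p · weight(a) ≥ np`.
Conversely, with `p = ∏ b_i`, the monomial `t^(pa)` is divisible by `∏ (t_i^(b_i))^(p a_i / b_i)`,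
a product of `p · weight(a) ≥ pn` generators of `q`.

A point `x ≥ 0` of weight `S ≥ 1` lies above the point `x / S`, restricted to the first `r`
coordinates, of the simplex `conv(b_i e_i)`. An extreme point `p + z` of `NP(q)`, with `p` in the
simplex and `z ≥ 0`, is the midpoint of `p` and `p + 2z`, so `z = 0` and it is a vertex of the
simplex; each `b_i e_i` is extreme since the weight and the other coordinates are minimal there.
-/

section WeightIdeal

variable {σ R : Type*} [CommSemiring R] {w : (σ →₀ ℕ) →+ ℚ}

variable (R w) in
def weightIdeal (c : ℚ) : Ideal (MvPolynomial σ R) :=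
  Ideal.span ((fun A => monomial A 1) '' {A | c ≤ w A})

theorem monomial_mem_weightIdeal_iff [Nontrivial R] (hw : Monotone w) {a : σ →₀ ℕ} {c : ℚ} :
    monomial a 1 ∈ weightIdeal R w c ↔ c ≤ w a := by
  classical
  refine ⟨fun ha => ?_, fun ha => Ideal.subset_span ⟨a, ha, rfl⟩⟩
  rw [weightIdeal, mem_ideal_span_monomial_image] at ha
  obtain ⟨A, hA, hAa⟩ := ha a (by simp [support_monomial])
  exact hA.trans (hw hAa)

theorem weightIdeal_zero : weightIdeal R w 0 = ⊤ :=
  Ideal.eq_top_of_isUnit_mem _ (Ideal.subset_span ⟨0, by simp, rfl⟩) (by simp)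

theorem weightIdeal_mul_le (c d : ℚ) :
    weightIdeal R w c * weightIdeal R w d ≤ weightIdeal R w (c + d) := by
  rw [weightIdeal, weightIdeal, Ideal.span_mul_span', Ideal.span_le]
  rintro _ ⟨_, ⟨A, hA, rfl⟩, _, ⟨B, hB, rfl⟩, rfl⟩
  refine Ideal.subset_span ⟨A + B, ?_, by simp [monomial_mul]⟩
  simpa using add_le_add hA hB

theorem pow_le_weightIdeal {I : Ideal (MvPolynomial σ R)} (hI : I ≤ weightIdeal R w 1) (n : ℕ) :
    I ^ n ≤ weightIdeal R w n := by
  induction n with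
  | zero => simp [weightIdeal_zero]
  | succ n ih =>
    rw [pow_succ, Nat.cast_succ]
    exact (Ideal.mul_mono ih hI).trans (weightIdeal_mul_le _ _)

theorem intCl_pow_le_weightIdeal {K : Type*} [Field K] {I : Ideal (MvPolynomial σ K)}
    (hw : Monotone w) (hI : I ≤ weightIdeal K w 1) (n : ℕ) :
    intCl (I ^ n) ≤ weightIdeal K w n := by
  refine Ideal.span_le.mpr ?_
  rintro _ ⟨a, p, hp, rfl, hap⟩
  have hpa : ((n * p : ℕ) : ℚ) ≤ w (p • a) := by
    rw [← monomial_mem_weightIdeal_iff (R := K) hw, ← one_pow p, ← monomial_pow]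
    exact pow_le_weightIdeal hI _ (by rwa [pow_mul])
  rw [map_nsmul, nsmul_eq_mul, Nat.cast_mul, mul_comm] at hpa
  rw [SetLike.mem_coe, monomial_mem_weightIdeal_iff hw]
  exact le_of_mul_le_mul_left hpa (by exact_mod_cast hp)

end WeightIdeal

section IntegralClosure

variable {K : Type*} [Field K] {s r : ℕ} {h : r ≤ s} {b : Fin r → ℕ}

variable (h b) in
def expWeight : (Fin s →₀ ℕ) →+ ℚ where
  toFun a := ∑ i, (a (Fin.castLE h i) : ℚ) / b i
  map_zero' := by simp
  map_add' a c := by simp [add_div, Finset.sum_add_distrib]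

theorem expWeight_apply (a : Fin s →₀ ℕ) :
    expWeight h b a = ∑ i, (a (Fin.castLE h i) : ℚ) / b i := rfl

theorem expWeight_monotone : Monotone (expWeight h b) := fun a c hac => by
  simp only [expWeight_apply]
  gcongr with i
  exact hac _

theorem expWeight_single (i : Fin r) (m : ℕ) :
    expWeight h b (Finsupp.single (Fin.castLE h i) m) = m / b i := by
  simp [expWeight_apply, Finsupp.single_apply, Fin.castLE_inj, ite_div]

theorem irrId_le_weightIdeal (hb : ∀ i, 1 ≤ b i) :
    irrId K h b ≤ weightIdeal K (expWeight h b) 1 := by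
  refine Ideal.span_le.mpr ?_
  rintro _ ⟨i, rfl⟩
  refine Ideal.subset_span ⟨Finsupp.single (Fin.castLE h i) (b i), ?_, X_pow_eq_monomial.symm⟩
  have hbi : (b i : ℚ) ≠ 0 := by exact_mod_cast Nat.one_le_iff_ne_zero.mp (hb i)
  simp [expWeight_single, div_self hbi]

theorem X_pow_mem_irrId (i : Fin r) :
    (X (Fin.castLE h i) : MvPolynomial (Fin s) K) ^ b i ∈ irrId K h b :=
  Ideal.subset_span ⟨i, rfl⟩

theorem monomial_mem_irrId_pow (a : Fin s →₀ ℕ) (c : Fin r → ℕ)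
    (hc : ∀ i, b i * c i ≤ a (Fin.castLE h i)) :
    (monomial a 1 : MvPolynomial (Fin s) K) ∈ irrId K h b ^ ∑ i, c i := by
  have hgen : ∏ i, ((X (Fin.castLE h i) : MvPolynomial (Fin s) K) ^ b i) ^ c i ∈
      irrId K h b ^ ∑ i, c i := by
    rw [← Finset.prod_pow_eq_pow_sum]
    exact Ideal.prod_mem_prod fun i _ => Ideal.pow_mem_pow (X_pow_mem_irrId i) _
  refine Ideal.mem_of_dvd _ ?_ hgen
  calc ∏ i, ((X (Fin.castLE h i) : MvPolynomial (Fin s) K) ^ b i) ^ c i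
      = ∏ i, X (Fin.castLE h i) ^ (b i * c i) := by simp only [pow_mul]
    _ ∣ ∏ i, X (Fin.castLE h i) ^ a (Fin.castLE h i) :=
      Finset.prod_dvd_prod_of_dvd _ _ fun i _ => pow_dvd_pow _ (hc i)
    _ = ∏ j ∈ Finset.univ.map (Fin.castLEEmb h), X j ^ a j :=
      (Finset.prod_map Finset.univ (Fin.castLEEmb h) fun j => X j ^ a j).symm
    _ ∣ ∏ j, X j ^ a j := Finset.prod_dvd_prod_of_subset _ _ _ (Finset.subset_univ _)
    _ = monomial a 1 := by
      rw [monomial_eq, C_1, one_mul, Finsupp.prod_fintype _ _ fun _ => pow_zero _]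

theorem monomial_mem_intCl_irrId_pow (hb : ∀ i, 1 ≤ b i) {a : Fin s →₀ ℕ} {n : ℕ}
    (hn : (n : ℚ) ≤ expWeight h b a) :
    (monomial a 1 : MvPolynomial (Fin s) K) ∈ intCl (irrId K h b ^ n) := by
  set p := ∏ i, b i
  set c : Fin r → ℕ := fun i => p / b i * a (Fin.castLE h i)
  have hbc : ∀ i, b i * c i = p * a (Fin.castLE h i) := fun i => by
    rw [← mul_assoc, Nat.mul_div_cancel' (Finset.dvd_prod_of_mem b (Finset.mem_univ i))]
  have hpc : n * p ≤ ∑ i, c i := by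
    have hsum : ((∑ i, c i : ℕ) : ℚ) = p * expWeight h b a := by
      rw [expWeight_apply, Finset.mul_sum, Nat.cast_sum]
      refine Finset.sum_congr rfl fun i _ => ?_
      have hbi : (b i : ℚ) ≠ 0 := by exact_mod_cast Nat.one_le_iff_ne_zero.mp (hb i)
      rw [← mul_div_assoc, eq_div_iff hbi]
      exact_mod_cast (mul_comm _ _).trans (hbc i)
    have : ((n * p : ℕ) : ℚ) ≤ ((∑ i, c i : ℕ) : ℚ) := by
      rw [hsum, Nat.cast_mul, mul_comm]
      gcongr
    exact_mod_cast this
  refine Ideal.subset_span ⟨a, p, Finset.one_le_prod' fun i _ => hb i, rfl, ?_⟩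
  rw [← pow_mul, monomial_pow, one_pow]
  exact Ideal.pow_le_pow_right hpc (monomial_mem_irrId_pow _ c fun i => by simp [hbc])

theorem monomial_mem_intCl_irrId_pow_iff (hb : ∀ i, 1 ≤ b i) (a : Fin s →₀ ℕ) (n : ℕ) :
    (monomial a 1 : MvPolynomial (Fin s) K) ∈ intCl (irrId K h b ^ n) ↔
      (n : ℚ) ≤ expWeight h b a :=
  ⟨fun ha => (monomial_mem_weightIdeal_iff expWeight_monotone).mp
      (intCl_pow_le_weightIdeal expWeight_monotone (irrId_le_weightIdeal hb) n ha),
    monomial_mem_intCl_irrId_pow hb⟩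

end IntegralClosure

section Segment

variable {𝕜 E : Type*} [Field 𝕜] [LinearOrder 𝕜] [IsStrictOrderedRing 𝕜] [AddCommGroup E]
  [Module 𝕜 E]

theorem LinearMap.eq_of_mem_openSegment_of_le {f : E →ₗ[𝕜] 𝕜} {x x₁ x₂ : E}
    (hx : x ∈ openSegment 𝕜 x₁ x₂) (h₁ : f x ≤ f x₁) (h₂ : f x ≤ f x₂) : f x₁ = f x := by
  obtain ⟨a, c, ha, hc, hac, rfl⟩ := hx
  simp only [map_add, map_smul, smul_eq_mul] at h₁ h₂ ⊢
  obtain rfl : a = 1 - c := by linarith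
  nlinarith

theorem eq_zero_of_add_mem_extremePoints {A : Set E} {p z : E}
    (hx : p + z ∈ A.extremePoints 𝕜) (hp : p ∈ A) (hpz : p + (z + z) ∈ A) : z = 0 := by
  have hmid : p + z ∈ openSegment 𝕜 p (p + (z + z)) :=
    ⟨1 / 2, 1 / 2, by norm_num, by norm_num, by norm_num, by module⟩
  simpa using (hx.2 hp hpz hmid).symm

end Segment

section NewtonPolyhedron

variable {s r : ℕ} {h : r ≤ s} {b : Fin r → ℕ}

variable (h b) in
def npWeight : (Fin s → ℝ) →ₗ[ℝ] ℝ :=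
  ∑ i, (b i : ℝ)⁻¹ • LinearMap.proj (Fin.castLE h i)

variable (h b) in
def npVertex (i : Fin r) : Fin s → ℝ :=
  Pi.single (Fin.castLE h i) (b i)

theorem npWeight_apply (x : Fin s → ℝ) :
    npWeight h b x = ∑ i, x (Fin.castLE h i) / b i := by
  simp [npWeight, div_eq_inv_mul]

theorem npWeight_single (i : Fin r) (t : ℝ) :
    npWeight h b (Pi.single (Fin.castLE h i) t) = t / b i := by
  simp [npWeight_apply, Pi.single_apply, Fin.castLE_inj, ite_div]

theorem npWeight_nonneg {x : Fin s → ℝ} (hx : 0 ≤ x) : 0 ≤ npWeight h b x := by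
  rw [npWeight_apply]
  exact Finset.sum_nonneg fun i _ => div_nonneg (hx _) (Nat.cast_nonneg _)

theorem npWeight_npVertex (hb : ∀ i, 1 ≤ b i) (i : Fin r) : npWeight h b (npVertex h b i) = 1 :=
  (npWeight_single i _).trans (div_self (by exact_mod_cast Nat.one_le_iff_ne_zero.mp (hb i)))

theorem npVertex_nonneg (i : Fin r) : 0 ≤ npVertex h b i :=
  Pi.single_nonneg.2 (Nat.cast_nonneg _)

theorem npVertex_eq_ite :
    npVertex h b = fun i j => if j = Fin.castLE h i then (b i : ℝ) else 0 :=
  funext fun _ => funext fun _ => Pi.single_apply _ _ _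

theorem NPq_eq_convexHull_add :
    NPq h b = {x | ∃ p ∈ convexHull ℝ (Set.range (npVertex h b)), ∃ z, 0 ≤ z ∧ x = z + p} := by
  rw [npVertex_eq_ite]
  rfl

theorem convexHull_npVertex_subset_NPq : convexHull ℝ (Set.range (npVertex h b)) ⊆ NPq h b :=
  fun p hp => by
    rw [NPq_eq_convexHull_add]
    exact ⟨p, hp, 0, le_rfl, (zero_add p).symm⟩

theorem NPq_eq (hb : ∀ i, 1 ≤ b i) : NPq h b = {x | 0 ≤ x ∧ 1 ≤ npWeight h b x} := by
  rw [NPq_eq_convexHull_add]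
  ext x
  constructor
  · rintro ⟨p, hp, z, hz, rfl⟩
    have hconv : Convex ℝ {x : Fin s → ℝ | 0 ≤ x ∧ 1 ≤ npWeight h b x} :=
      (convex_Ici 0).inter (convex_halfSpace_ge (npWeight h b).isLinear 1)
    obtain ⟨hp0, hp1⟩ : 0 ≤ p ∧ 1 ≤ npWeight h b p := convexHull_min
      (by rintro _ ⟨i, rfl⟩; exact ⟨npVertex_nonneg i, (npWeight_npVertex hb i).ge⟩) hconv hp
    refine ⟨add_nonneg hz hp0, ?_⟩
    rw [map_add]
    linarith [npWeight_nonneg (h := h) (b := b) hz]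
  · rintro ⟨hx0, hx1⟩
    -- `x` lies above `p`, the part of `x / npWeight x` on the first `r` coordinates
    set y := (npWeight h b x)⁻¹ • x
    set p : Fin s → ℝ := ∑ i, Pi.single (Fin.castLE h i) (y (Fin.castLE h i))
    have hy0 : 0 ≤ y := smul_nonneg (by positivity) hx0
    have hyx : y ≤ x := fun j =>
      mul_le_of_le_one_left (hx0 j) (inv_le_one_of_one_le₀ hx1)
    have hpy : p ≤ y := calc
      p = ∑ j ∈ Finset.univ.map (Fin.castLEEmb h), (Pi.single j (y j) : Fin s → ℝ) :=
          (Finset.sum_map Finset.univ (Fin.castLEEmb h) fun j => Pi.single j (y j)).symm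
      _ ≤ ∑ j, Pi.single j (y j) := Finset.sum_le_sum_of_subset_of_nonneg
          (Finset.subset_univ _) fun j _ _ => Pi.single_nonneg.2 (hy0 j)
      _ = y := Finset.univ_sum_single y
    have hp : p = ∑ i, (y (Fin.castLE h i) / b i) • npVertex h b i := by
      refine Finset.sum_congr rfl fun i _ => ?_
      have hbi : (b i : ℝ) ≠ 0 := by exact_mod_cast Nat.one_le_iff_ne_zero.mp (hb i)
      rw [npVertex, ← Pi.single_smul, smul_eq_mul, div_mul_cancel₀ _ hbi]
    refine ⟨p, ?_, x - p, sub_nonneg.2 (hpy.trans hyx), (sub_add_cancel x p).symm⟩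
    rw [hp]
    refine (convex_convexHull ℝ _).sum_mem (fun i _ => div_nonneg (hy0 _) (Nat.cast_nonneg _))
      ?_ fun i _ => subset_convexHull ℝ _ ⟨i, rfl⟩
    rw [← npWeight_apply, map_smul, smul_eq_mul, inv_mul_cancel₀ (by linarith)]

theorem extremePoints_NPq_subset : (NPq h b).extremePoints ℝ ⊆ Set.range (npVertex h b) := by
  intro x hx
  have hxNP := hx.1
  rw [NPq_eq_convexHull_add] at hxNP
  obtain ⟨p, hp, z, hz, rfl⟩ := hxNP
  have hpz : p + (z + z) ∈ NPq h b := by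
    rw [NPq_eq_convexHull_add]
    exact ⟨p, hp, z + z, add_nonneg hz hz, add_comm _ _⟩
  rw [add_comm] at hx
  obtain rfl := eq_zero_of_add_mem_extremePoints hx (convexHull_npVertex_subset_NPq hp) hpz
  rw [add_zero] at hx
  rw [zero_add]
  exact extremePoints_convexHull_subset
    (inter_extremePoints_subset_extremePoints_of_subset convexHull_npVertex_subset_NPq ⟨hp, hx⟩)

theorem npVertex_mem_extremePoints (hb : ∀ i, 1 ≤ b i) (i : Fin r) :
    npVertex h b i ∈ {x | 0 ≤ x ∧ 1 ≤ npWeight h b x}.extremePoints ℝ := by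
  refine ⟨⟨npVertex_nonneg i, (npWeight_npVertex hb i).ge⟩, ?_⟩
  rintro y ⟨hy0, hy1⟩ y' ⟨hy0', hy1'⟩ hseg
  have hoff : ∀ j ≠ Fin.castLE h i, y j = 0 := fun j hj => by
    have hvj : npVertex h b i j = 0 := by simp [npVertex, hj]
    have hproj := (LinearMap.proj (R := ℝ) (φ := fun _ : Fin s => ℝ) j).eq_of_mem_openSegment_of_le
      hseg (by simpa [hvj] using hy0 j) (by simpa [hvj] using hy0' j)
    simpa [hvj] using hproj
  have hy : y = (Pi.single (Fin.castLE h i) (y (Fin.castLE h i)) : Fin s → ℝ) := funext fun j => by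
    by_cases hj : j = Fin.castLE h i
    · subst hj; simp
    · simp [hj, hoff j hj]
  have hw : npWeight h b y = 1 := ((npWeight h b).eq_of_mem_openSegment_of_le hseg
    (by rwa [npWeight_npVertex hb]) (by rwa [npWeight_npVertex hb])).trans (npWeight_npVertex hb i)
  have hbi : (b i : ℝ) ≠ 0 := by exact_mod_cast Nat.one_le_iff_ne_zero.mp (hb i)
  rw [hy, npWeight_single, div_eq_one_iff_eq hbi] at hw
  rw [hy, hw, npVertex]

end NewtonPolyhedron

theorem stmt19_general {K : Type*} [Field K] {s r : ℕ} (h : r ≤ s)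
    (b : Fin r → ℕ) (hb : ∀ i, 1 ≤ b i) :
    (∀ (a : Fin s →₀ ℕ) (n : ℕ), 1 ≤ n →
        ((monomial a 1 : MvPolynomial (Fin s) K) ∈ intCl ((irrId K h b) ^ n) ↔
          (n : ℚ) ≤ ∑ i : Fin r, (a (Fin.castLE h i) : ℚ) / (b i : ℚ))) ∧
      NPq h b = {x : Fin s → ℝ | (∀ i, 0 ≤ x i) ∧
        1 ≤ ∑ i : Fin r, x (Fin.castLE h i) / (b i : ℝ)} ∧
      Set.extremePoints ℝ (NPq h b) = Set.range (fun i : Fin r =>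
        fun j : Fin s => if j = Fin.castLE h i then ((b i : ℝ)) else 0) := by
  refine ⟨fun a n _ => monomial_mem_intCl_irrId_pow_iff hb a n, ?_, ?_⟩
  · rw [NPq_eq hb]
    ext x
    simp [Pi.le_def, npWeight_apply]
  · rw [← npVertex_eq_ite]
    refine extremePoints_NPq_subset.antisymm ?_
    rintro _ ⟨i, rfl⟩
    rw [NPq_eq hb]
    exact npVertex_mem_extremePoints hb i

/-- For `q = (t_1^{b_1},...,t_r^{b_r})`: (1) `t^a ∈ closure(q^n)` iff `Σ a_i/b_i ≥ n`;
(2) `NP(q) = {x ≥ 0 : Σ x_i/b_i ≥ 1}`; (3) the vertex set of `NP(q)` is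
`{b_1 e_1, ..., b_r e_r}`. -/
theorem stmt19 {K : Type*} [Field K] {s r : ℕ} (h : r ≤ s) (hr : 1 ≤ r)
    (b : Fin r → ℕ) (hb : ∀ i, 1 ≤ b i) :
    (∀ (a : Fin s →₀ ℕ) (n : ℕ), 1 ≤ n →
        ((monomial a 1 : MvPolynomial (Fin s) K) ∈ intCl ((irrId K h b) ^ n) ↔
          (n : ℚ) ≤ ∑ i : Fin r, (a (Fin.castLE h i) : ℚ) / (b i : ℚ))) ∧
      NPq h b = {x : Fin s → ℝ | (∀ i, 0 ≤ x i) ∧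
        1 ≤ ∑ i : Fin r, x (Fin.castLE h i) / (b i : ℝ)} ∧
      Set.extremePoints ℝ (NPq h b) = Set.range (fun i : Fin r =>
        fun j : Fin s => if j = Fin.castLE h i then ((b i : ℝ)) else 0) :=
  stmt19_general h b hb
end
end
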